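/- arXiv:1611.07548 — 7 statements merged into one kernel-verified Lean document; each statement's English description precedes it below -/
import Mathlib

section
/- Let a, b, c, d be nonnegative real numbers with ad − bc ≥ 0. Then the polynomial y₁y₂ + a·x₁y₂ + b·x₂y₂ + c·x₁y₁ + d·x₂y₁ + (ad−bc)·x₁x₂ ∈ ℂ[x₁,x₂,y₁,y₂] is stable. (Equivalently, for a totally nonnegative 2×2 matrix Q = [[a,c],[b,d]], the operator Q_# is a true stability preserver.) -/
open MvPolynomial

noncomputable section

private lemma quad1 (a b c d p q : ℝ) (ha : 0 ≤ a) (hb : 0 ≤ b) (hc : 0 ≤ c)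
    (hd : 0 ≤ d) (hdet : 0 ≤ a * d - b * c) :
    0 ≤ a * c * p ^ 2 + 2 * (b * c) * p * q + b * d * q ^ 2 := by
  rcases eq_or_lt_of_le ha with h | h
  · have hbc : b * c = 0 := le_antisymm (by nlinarith) (mul_nonneg hb hc)
    have h1 : b * c * (p * q) = 0 := by rw [hbc]; ring
    have h2 : a * c * p ^ 2 = 0 := by rw [← h]; ring
    nlinarith [mul_nonneg (mul_nonneg hb hd) (sq_nonneg q), h1, h2]
  · nlinarith [mul_nonneg hc (sq_nonneg (a * p + b * q)),
      mul_nonneg (mul_nonneg hb (sq_nonneg q)) hdet]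

private lemma quad2 (a b c d p r : ℝ) (ha : 0 ≤ a) (hb : 0 ≤ b) (hc : 0 ≤ c)
    (hd : 0 ≤ d) (hdet : 0 ≤ a * d - b * c) :
    0 ≤ d * r ^ 2 + 2 * ((a * d - b * c) * (p * r)) + a * (a * d - b * c) * p ^ 2 := by
  rcases eq_or_lt_of_le hd with h | h
  · have hbc : a * d - b * c = 0 := le_antisymm (by nlinarith) hdet
    have h1 : (a * d - b * c) * (p * r) = 0 := by rw [hbc]; ring
    have h2 : a * (a * d - b * c) * p ^ 2 = 0 := by rw [hbc]; ring
    nlinarith [mul_nonneg hd (sq_nonneg r)]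
  · nlinarith [sq_nonneg (d * r + (a * d - b * c) * p),
      mul_nonneg (mul_nonneg (mul_nonneg hb hc) hdet) (sq_nonneg p)]

private lemma keyReal (a b c d p P q Q r R : ℝ) (ha : 0 ≤ a) (hb : 0 ≤ b) (hc : 0 ≤ c)
    (hd : 0 ≤ d) (hdet : 0 ≤ a * d - b * c) (hP : 0 ≤ P) (hQ : 0 ≤ Q) (hR : 0 ≤ R) :
    0 ≤ d*Q*R^2 + d*Q*r^2 + c*P*R^2 + c*P*r^2 + b*d*Q^2*R + b*d*q^2*R
      - 2*(b*c)*(p*(Q*r)) + 2*(b*c)*(p*(q*R)) - b^2*c*(P*Q^2) - b^2*c*(P*q^2)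
      + 2*(a*d)*(P*(Q*R)) + 2*(a*d)*(p*(Q*r)) + a*c*P^2*R + a*c*p^2*R
      + a*b*d*(P*Q^2) + a*b*d*(P*q^2) - a*b*c*(P^2*Q) - a*b*c*(p^2*Q)
      + a^2*d*(P^2*Q) + a^2*d*(p^2*Q) := by
  have h1 : 0 ≤ R * (a * c * p ^ 2 + 2 * (b * c) * p * q + b * d * q ^ 2) :=
    mul_nonneg hR (quad1 a b c d p q ha hb hc hd hdet)
  have h2 : 0 ≤ R * (a * c * P ^ 2 + 2 * (a * d) * (P * Q) + b * d * Q ^ 2) := by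
    have := mul_nonneg (mul_nonneg ha hd) (mul_nonneg hP hQ)
    have := mul_nonneg (mul_nonneg ha hc) (sq_nonneg P)
    have := mul_nonneg (mul_nonneg hb hd) (sq_nonneg Q)
    nlinarith
  have h3 : 0 ≤ Q * (d * r ^ 2 + 2 * ((a * d - b * c) * (p * r))
      + a * (a * d - b * c) * p ^ 2) :=
    mul_nonneg hQ (quad2 a b c d p r ha hb hc hd hdet)
  have h4 : 0 ≤ (a * d - b * c) * b * P * (q ^ 2 + Q ^ 2) :=
    mul_nonneg (mul_nonneg (mul_nonneg hdet hb) hP)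
      (add_nonneg (sq_nonneg q) (sq_nonneg Q))
  have h5 : 0 ≤ (a * d - b * c) * a * Q * P ^ 2 :=
    mul_nonneg (mul_nonneg (mul_nonneg hdet ha) hQ) (sq_nonneg P)
  have h6 : 0 ≤ d * Q * R ^ 2 + c * P * R ^ 2 + c * P * r ^ 2 := by
    have := mul_nonneg (mul_nonneg hd hQ) (sq_nonneg R)
    have := mul_nonneg (mul_nonneg hc hP) (sq_nonneg R)
    have := mul_nonneg (mul_nonneg hc hP) (sq_nonneg r)
    nlinarith
  nlinarith [h1, h2, h3, h4, h5, h6]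

/-- A multivariate polynomial over `ℂ` is *stable* if it is identically zero or has no zeros
in the product of upper half planes. -/
def IsStable {σ : Type*} (f : MvPolynomial σ ℂ) : Prop :=
  f = 0 ∨ ∀ u : σ → ℂ, (∀ i, 0 < (u i).im) → MvPolynomial.eval u f ≠ 0

/-- For a totally nonnegative `2 × 2` matrix `[[a, c], [b, d]]`, the symbol
`y₁y₂ + a x₁y₂ + b x₂y₂ + c x₁y₁ + d x₂y₁ + (ad - bc) x₁x₂` of `Q_#` is stable.
Here `x₁ = X 0`, `x₂ = X 1`, `y₁ = X 2`, `y₂ = X 3`. -/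
theorem symbol_of_tnn_2x2_stable (a b c d : ℝ) (ha : 0 ≤ a) (hb : 0 ≤ b) (hc : 0 ≤ c)
    (hd : 0 ≤ d) (hdet : 0 ≤ a * d - b * c) :
    IsStable ((X 2 * X 3 + C (a : ℂ) * X 0 * X 3 + C (b : ℂ) * X 1 * X 3 +
        C (c : ℂ) * X 0 * X 2 + C (d : ℂ) * X 1 * X 2 +
        C ((a * d - b * c : ℝ) : ℂ) * X 0 * X 1 : MvPolynomial (Fin 4) ℂ)) := by
  right
  intro u hu h0
  simp only [map_add, map_mul, eval_C, eval_X] at h0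
  set x₁ := u 0 with hx₁
  set x₂ := u 1 with hx₂
  set y₁ := u 2 with hy₁
  set y₂ := u 3 with hy₂
  set D : ℂ := y₁ + (a : ℂ) * x₁ + (b : ℂ) * x₂ with hD
  set N : ℂ := ((c : ℂ) * x₁ + (d : ℂ) * x₂) * y₁ + ((a * d - b * c : ℝ) : ℂ) * x₁ * x₂
    with hN
  have hx₁i : 0 < x₁.im := hu 0
  have hx₂i : 0 < x₂.im := hu 1
  have hy₁i : 0 < y₁.im := hu 2
  have hy₂i : 0 < y₂.im := hu 3
  have hDim : 0 < D.im := by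
    simp only [hD, Complex.add_im, Complex.mul_im, Complex.ofReal_re, Complex.ofReal_im]
    nlinarith [mul_nonneg ha hx₁i.le, mul_nonneg hb hx₂i.le]
  have hDne : D ≠ 0 := fun h => by simp [h] at hDim
  have heq : y₂ * D + N = 0 := by rw [hD, hN]; linear_combination h0
  have him : 0 ≤ (N * (starRingEnd ℂ) D).im := by
    have := keyReal a b c d x₁.re x₁.im x₂.re x₂.im y₁.re y₁.im ha hb hc hd hdet
      hx₁i.le hx₂i.le hy₁i.le
    simp only [hN, hD, Complex.mul_im, Complex.mul_re, Complex.add_im, Complex.add_re,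
      Complex.conj_re, Complex.conj_im, Complex.ofReal_re, Complex.ofReal_im,
      Complex.sub_re, Complex.sub_im]
    nlinarith [this]
  have hmul : ((y₂ * D + N) * (starRingEnd ℂ) D).im = 0 := by rw [heq]; simp
  have hexp : ((y₂ * D + N) * (starRingEnd ℂ) D).im
      = y₂.im * Complex.normSq D + (N * (starRingEnd ℂ) D).im := by
    have h1 : (y₂ * D + N) * (starRingEnd ℂ) D
        = y₂ * (Complex.normSq D : ℂ) + N * (starRingEnd ℂ) D := by
      rw [add_mul, mul_assoc, Complex.mul_conj]
    rw [h1]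
    simp [Complex.add_im, Complex.mul_im]
  rw [hexp] at hmul
  have hns : 0 < Complex.normSq D := Complex.normSq_pos.mpr hDne
  nlinarith [mul_pos hy₂i hns]
end
end

section
/- Let a₁₂, a₁₃, a₁₄, a₂₃, a₂₄, a₃₄ be nonnegative real numbers and let f = a₁₂x₁x₂ + a₁₃x₁x₃ + a₁₄x₁x₄ + a₂₃x₂x₃ + a₂₄x₂x₄ + a₃₄x₃x₄ ∈ ℂ[x₁,x₂,x₃,x₄]. Then f is stable if and only if a₁₂²a₃₄² + a₁₃²a₂₄² + a₁₄²a₂₃² − 2a₁₂a₃₄a₁₃a₂₄ − 2a₁₃a₂₄a₁₄a₂₃ − 2a₁₂a₃₄a₁₄a₂₃ ≤ 0. -/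
/-!
For real `x`, `y` and complex `t`, `f (x + t • y) = q y * t ^ 2 + b x y * t + q x`, where `q` is the
real quadratic form `∑_{i<j} aᵢⱼ xᵢ xⱼ` and `b` its polarization. Hence `f` is stable iff
`4 q(y) q(x) ≤ b(x, y) ^ 2` for all real `x` and all positive `y`: a violation yields a root `t` in
the upper half plane, and a root `x + i y` forces `b(x, y) = 0` and `q(x) = q(y)`, hence
`q(y) = 0` and `f = 0`.

Replacing `aᵢⱼ` by `aᵢⱼ yᵢ yⱼ` and `xᵢ` by `xᵢ / yᵢ` reduces this inequality to `y = 1`, where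
`b(x, 1) ^ 2 - 4 q(1) q(x)` is a quadratic form in the differences `xᵢ - x₄`. Its principal minors
are nonnegative because `Δ ≤ 0` implies `a₁₂a₃₄ ≤ (a₁₃ + a₁₄)(a₂₃ + a₂₄)` and its two analogues,
and its determinant is `4 q(1)² (-Δ)`.

Conversely, with `α = √(a₁₂a₃₄)`, `β = √(a₁₃a₂₄)`, `γ = √(a₁₄a₂₃)` Heron's formula reads
`Δ = -(α + β + γ)(β + γ - α)(γ + α - β)(α + β - γ)`, so if `Δ > 0` one of them, say `α`, exceeds
the sum of the other two. Then `x = v - w`, `y = v + w` violates the inequality for suitable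
positive `v` supported on `{x₁, x₂}` and `w` supported on `{x₃, x₄}` (chosen by AM-GM).
-/

open MvPolynomial

noncomputable section

def triDisc (p q r : ℝ) : ℝ := p ^ 2 + q ^ 2 + r ^ 2 - 2 * p * q - 2 * q * r - 2 * r * p

lemma le_add_add_of_triDisc_nonpos {p q r s : ℝ} (hs : 0 ≤ s) (hqr : 4 * q * r ≤ s ^ 2)
    (h : triDisc p q r ≤ 0) : p ≤ q + r + s := by
  have : triDisc p q r = (p - q - r) ^ 2 - 4 * q * r := by unfold triDisc; ring
  by_contra! hlt
  nlinarith

lemma lt_or_lt_or_lt_of_triDisc_sq_pos {α β γ : ℝ} (hα : 0 ≤ α) (hβ : 0 ≤ β) (hγ : 0 ≤ γ)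
    (h : 0 < triDisc (α ^ 2) (β ^ 2) (γ ^ 2)) : β + γ < α ∨ γ + α < β ∨ α + β < γ := by
  have heron : triDisc (α ^ 2) (β ^ 2) (γ ^ 2)
      = -((α + β + γ) * (β + γ - α) * (γ + α - β) * (α + β - γ)) := by
    unfold triDisc; ring
  by_contra! htri
  obtain ⟨h₁, h₂, h₃⟩ := htri
  have : 0 ≤ (α + β + γ) * (β + γ - α) * (γ + α - β) * (α + β - γ) := by
    apply_rules [mul_nonneg] <;> linarith
  linarith

lemma binary_form_nonneg {a b c : ℝ} (ha : 0 ≤ a) (hc : 0 ≤ c) (h : b ^ 2 ≤ a * c) (x y : ℝ) :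
    0 ≤ a * x ^ 2 + 2 * b * x * y + c * y ^ 2 := by
  rcases ha.eq_or_lt with rfl | ha
  · obtain rfl : b = 0 := by nlinarith
    nlinarith [mul_nonneg hc (sq_nonneg y)]
  · have : a * (a * x ^ 2 + 2 * b * x * y + c * y ^ 2)
        = (a * x + b * y) ^ 2 + (a * c - b ^ 2) * y ^ 2 := by ring
    nlinarith [sq_nonneg (a * x + b * y), mul_nonneg (sub_nonneg.2 h) (sq_nonneg y)]

lemma ternary_form_nonneg {g₁₁ g₁₂ g₁₃ g₂₂ g₂₃ g₃₃ : ℝ} (h₁ : 0 ≤ g₁₁) (h₂ : 0 ≤ g₂₂)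
    (h₃ : 0 ≤ g₃₃) (h₁₂ : g₁₂ ^ 2 ≤ g₁₁ * g₂₂) (h₁₃ : g₁₃ ^ 2 ≤ g₁₁ * g₃₃)
    (h₂₃ : g₂₃ ^ 2 ≤ g₂₂ * g₃₃)
    (hdet : 0 ≤ g₁₁ * g₂₂ * g₃₃ + 2 * g₁₂ * g₁₃ * g₂₃ - g₁₁ * g₂₃ ^ 2 - g₂₂ * g₁₃ ^ 2
      - g₃₃ * g₁₂ ^ 2) (x y z : ℝ) :
    0 ≤ g₁₁ * x ^ 2 + g₂₂ * y ^ 2 + g₃₃ * z ^ 2 + 2 * g₁₂ * x * y + 2 * g₁₃ * x * z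
      + 2 * g₂₃ * y * z := by
  rcases h₁.eq_or_lt with rfl | h₁
  · obtain rfl : g₁₂ = 0 := by nlinarith
    obtain rfl : g₁₃ = 0 := by nlinarith
    nlinarith [binary_form_nonneg h₂ h₃ h₂₃ y z]
  · -- `g₁₁` times the form is `(g₁₁ x + g₁₂ y + g₁₃ z) ^ 2` plus `schur`, the Schur complement
    -- of `g₁₁` scaled by `g₁₁`, whose determinant is `g₁₁ * hdet`.
    have schur := binary_form_nonneg (sub_nonneg.2 h₁₂) (sub_nonneg.2 h₁₃)
      (b := g₁₁ * g₂₃ - g₁₂ * g₁₃) (by nlinarith) y z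
    nlinarith [sq_nonneg (g₁₁ * x + g₁₂ * y + g₁₃ * z)]

lemma exists_pos_mul_add_div_lt {A D m : ℝ} (hA : 0 ≤ A) (hm : 0 < m) (h : 4 * A * D < m ^ 2) :
    ∃ s > 0, A * s + D / s < m := by
  rcases hA.eq_or_lt with rfl | hA
  · refine ⟨(|D| + 1) / m, by positivity, ?_⟩
    rw [zero_mul, zero_add, div_div_eq_mul_div, div_lt_iff₀ (by positivity)]
    nlinarith [le_abs_self D]
  · refine ⟨m / (2 * A), by positivity, ?_⟩
    rw [div_div_eq_mul_div]
    field_simp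
    nlinarith

lemma exists_sq_lt_of_sqrt_add_sqrt_lt {P Q A B C D : ℝ} (hA : 0 ≤ A) (hB : 0 ≤ B) (hC : 0 ≤ C)
    (hD : 0 ≤ D) (h : √(A * D) + √(B * C) < √(P * Q)) :
    ∃ l₁ l₂ m₁ m₂ : ℝ, 0 < l₁ ∧ 0 < l₂ ∧ 0 < m₁ ∧ 0 < m₂ ∧
      (A * l₁ * m₁ + B * l₁ * m₂ + C * l₂ * m₁ + D * l₂ * m₂) ^ 2
        < 4 * (P * l₁ * l₂) * (Q * m₁ * m₂) := by
  set ε := √(P * Q) - √(A * D) - √(B * C)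
  have hε : 0 < ε := by linarith
  have hPQ : 0 ≤ P * Q := by
    by_contra! hneg
    rw [Real.sqrt_eq_zero_of_nonpos hneg.le] at h
    linarith [Real.sqrt_nonneg (A * D), Real.sqrt_nonneg (B * C)]
  have bound {a d : ℝ} (ha : 0 ≤ a) (hd : 0 ≤ d) : 4 * a * d < (2 * √(a * d) + ε) ^ 2 := by
    nlinarith [Real.sq_sqrt (mul_nonneg ha hd), Real.sqrt_nonneg (a * d)]
  obtain ⟨s, hs, hAD⟩ := exists_pos_mul_add_div_lt hA (by positivity) (bound hA hD)
  obtain ⟨t, ht, hBC⟩ := exists_pos_mul_add_div_lt hB (by positivity) (bound hB hC)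
  set L := A * s + D / s + (B * t + C / t)
  have hL : 0 ≤ L := by positivity
  have hL' : L < 2 * √(P * Q) := by linarith
  refine ⟨s * t, 1, 1, t / s, by positivity, one_pos, one_pos, by positivity, ?_⟩
  have lhs : A * (s * t) * 1 + B * (s * t) * (t / s) + C * 1 * 1 + D * 1 * (t / s) = t * L := by
    simp only [L]
    field_simp
    ring
  have rhs : 4 * (P * (s * t) * 1) * (Q * 1 * (t / s)) = t ^ 2 * (2 * √(P * Q)) ^ 2 := by
    rw [mul_pow, Real.sq_sqrt hPQ]
    field_simp
    ring
  rw [lhs, rhs, mul_pow]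
  gcongr

lemma exists_im_pos_quadratic_root {a b c : ℝ} (ha : 0 < a) (h : b ^ 2 < 4 * a * c) :
    ∃ t : ℂ, 0 < t.im ∧ a * t ^ 2 + b * t + c = 0 := by
  set s := √(4 * a * c - b ^ 2)
  have hs : 0 < s := Real.sqrt_pos.2 (by linarith)
  have hs2 : (s : ℂ) ^ 2 = 4 * a * c - b ^ 2 := by
    exact_mod_cast Real.sq_sqrt (by linarith : 0 ≤ 4 * a * c - b ^ 2)
  refine ⟨(-b + s * Complex.I) / (2 * a : ℝ), ?_, ?_⟩
  · rw [Complex.div_ofReal_im]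
    simpa using div_pos hs (by positivity : (0 : ℝ) < 2 * a)
  · have : (a : ℂ) ≠ 0 := by exact_mod_cast ha.ne'
    push_cast
    field_simp
    linear_combination -hs2 + (s : ℂ) ^ 2 * Complex.I_sq

structure QuadCoeffs where
  (a12 a13 a14 a23 a24 a34 : ℝ)

namespace QuadCoeffs

variable (c : QuadCoeffs)

structure Nonneg : Prop where
  h12 : 0 ≤ c.a12
  h13 : 0 ≤ c.a13
  h14 : 0 ≤ c.a14
  h23 : 0 ≤ c.a23
  h24 : 0 ≤ c.a24
  h34 : 0 ≤ c.a34

def quad (z : Fin 4 → ℝ) : ℝ :=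
  c.a12 * z 0 * z 1 + c.a13 * z 0 * z 2 + c.a14 * z 0 * z 3 + c.a23 * z 1 * z 2
    + c.a24 * z 1 * z 3 + c.a34 * z 2 * z 3

def polar (z w : Fin 4 → ℝ) : ℝ :=
  c.a12 * (z 0 * w 1 + z 1 * w 0) + c.a13 * (z 0 * w 2 + z 2 * w 0)
    + c.a14 * (z 0 * w 3 + z 3 * w 0) + c.a23 * (z 1 * w 2 + z 2 * w 1)
    + c.a24 * (z 1 * w 3 + z 3 * w 1) + c.a34 * (z 2 * w 3 + z 3 * w 2)

def disc : ℝ := triDisc (c.a12 * c.a34) (c.a13 * c.a24) (c.a14 * c.a23)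

def toMvPolynomial : MvPolynomial (Fin 4) ℂ :=
  C (c.a12 : ℂ) * X 0 * X 1 + C (c.a13 : ℂ) * X 0 * X 2 + C (c.a14 : ℂ) * X 0 * X 3 +
    C (c.a23 : ℂ) * X 1 * X 2 + C (c.a24 : ℂ) * X 1 * X 3 + C (c.a34 : ℂ) * X 2 * X 3

def rescale (y : Fin 4 → ℝ) : QuadCoeffs :=
  ⟨c.a12 * (y 0 * y 1), c.a13 * (y 0 * y 2), c.a14 * (y 0 * y 3), c.a23 * (y 1 * y 2),
    c.a24 * (y 1 * y 3), c.a34 * (y 2 * y 3)⟩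

lemma eval_toMvPolynomial (x y : Fin 4 → ℝ) (t : ℂ) :
    eval (fun i => x i + t * y i) c.toMvPolynomial
      = c.quad y * t ^ 2 + c.polar x y * t + c.quad x := by
  simp only [toMvPolynomial, quad, polar, map_add, map_mul, eval_C, eval_X]
  push_cast
  ring

lemma quad_nonneg {c : QuadCoeffs} (hc : c.Nonneg) {y : Fin 4 → ℝ} (hy : ∀ i, 0 ≤ y i) :
    0 ≤ c.quad y := by
  obtain ⟨h12, h13, h14, h23, h24, h34⟩ := hc
  have y0 := hy 0; have y1 := hy 1; have y2 := hy 2; have y3 := hy 3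
  unfold quad
  positivity

lemma toMvPolynomial_eq_zero_of_quad_eq_zero {c : QuadCoeffs} (hc : c.Nonneg)
    {y : Fin 4 → ℝ} (hy : ∀ i, 0 < y i) (h : c.quad y = 0) : c.toMvPolynomial = 0 := by
  obtain ⟨h12, h13, h14, h23, h24, h34⟩ := hc
  have y0 := hy 0; have y1 := hy 1; have y2 := hy 2; have y3 := hy 3
  have eq_zero {a u v : ℝ} (ha : 0 ≤ a) (hu : 0 < u) (hv : 0 < v) (h : a * u * v ≤ 0) :
      a = 0 := by
    by_contra hne
    have : 0 < a * u * v := by positivity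
    linarith
  have t12 : 0 ≤ c.a12 * y 0 * y 1 := by positivity
  have t13 : 0 ≤ c.a13 * y 0 * y 2 := by positivity
  have t14 : 0 ≤ c.a14 * y 0 * y 3 := by positivity
  have t23 : 0 ≤ c.a23 * y 1 * y 2 := by positivity
  have t24 : 0 ≤ c.a24 * y 1 * y 3 := by positivity
  have t34 : 0 ≤ c.a34 * y 2 * y 3 := by positivity
  simp only [quad] at h
  simp [toMvPolynomial, eq_zero h12 y0 y1 (by linarith), eq_zero h13 y0 y2 (by linarith),
    eq_zero h14 y0 y3 (by linarith), eq_zero h23 y1 y2 (by linarith),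
    eq_zero h24 y1 y3 (by linarith), eq_zero h34 y2 y3 (by linarith)]

theorem isStable_iff_forall_four_mul_quad_le {c : QuadCoeffs} (hc : c.Nonneg) :
    IsStable c.toMvPolynomial ↔
      ∀ x y : Fin 4 → ℝ, (∀ i, 0 < y i) → 4 * c.quad y * c.quad x ≤ c.polar x y ^ 2 := by
  constructor
  · intro hst x y hy
    by_contra! hlt
    have hqy : 0 < c.quad y :=
      (c.quad_nonneg hc fun i => (hy i).le).lt_of_ne' fun h0 => by
        rw [h0] at hlt
        nlinarith [sq_nonneg (c.polar x y)]
    obtain ⟨t, ht, hroot⟩ := exists_im_pos_quadratic_root hqy hlt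
    rcases hst with h0 | hst
    · have : (c.quad y : ℂ) = 0 := by simpa [h0] using (c.eval_toMvPolynomial y y 0).symm
      exact hqy.ne' (by exact_mod_cast this)
    · refine hst (fun i => x i + t * y i) (fun i => ?_) ?_
      · simpa using mul_pos ht (hy i)
      · rw [eval_toMvPolynomial, hroot]
  · intro h
    refine or_iff_not_imp_left.2 fun hne u hy hroot => hne ?_
    set x : Fin 4 → ℝ := fun i => (u i).re
    set y : Fin 4 → ℝ := fun i => (u i).im
    have hxy : u = fun i => x i + Complex.I * y i := by
      funext i
      rw [mul_comm]
      exact (Complex.re_add_im (u i)).symm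
    rw [hxy, eval_toMvPolynomial, Complex.I_sq] at hroot
    have hre : c.quad x = c.quad y := by
      simpa [neg_add_eq_sub, sub_eq_zero] using congrArg Complex.re hroot
    have him : c.polar x y = 0 := by simpa using congrArg Complex.im hroot
    have hCS := h x y hy
    rw [him, hre] at hCS
    exact toMvPolynomial_eq_zero_of_quad_eq_zero hc hy (by nlinarith)

lemma Nonneg.rescale {c : QuadCoeffs} (hc : c.Nonneg) {y : Fin 4 → ℝ} (hy : ∀ i, 0 ≤ y i) :
    (c.rescale y).Nonneg := by
  obtain ⟨h12, h13, h14, h23, h24, h34⟩ := hc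
  have y0 := hy 0; have y1 := hy 1; have y2 := hy 2; have y3 := hy 3
  constructor <;> (simp only [QuadCoeffs.rescale]; positivity)

lemma disc_rescale (y : Fin 4 → ℝ) :
    (c.rescale y).disc = (y 0 * y 1 * y 2 * y 3) ^ 2 * c.disc := by
  simp only [disc, rescale, triDisc]
  ring

lemma quad_rescale_one (y : Fin 4 → ℝ) : (c.rescale y).quad 1 = c.quad y := by
  simp only [quad, rescale, Pi.one_apply]
  ring

lemma quad_rescale_div {y : Fin 4 → ℝ} (hy : ∀ i, y i ≠ 0) (x : Fin 4 → ℝ) :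
    (c.rescale y).quad (x / y) = c.quad x := by
  have := hy 0; have := hy 1; have := hy 2; have := hy 3
  simp only [quad, rescale, Pi.div_apply]
  field_simp

lemma polar_rescale_div {y : Fin 4 → ℝ} (hy : ∀ i, y i ≠ 0) (x : Fin 4 → ℝ) :
    (c.rescale y).polar (x / y) 1 = c.polar x y := by
  have := hy 0; have := hy 1; have := hy 2; have := hy 3
  simp only [polar, rescale, Pi.div_apply, Pi.one_apply]
  field_simp

theorem four_mul_quad_one_mul_quad_le {c : QuadCoeffs} (hc : c.Nonneg) (hd : c.disc ≤ 0)
    (z : Fin 4 → ℝ) : 4 * c.quad 1 * c.quad z ≤ c.polar z 1 ^ 2 := by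
  obtain ⟨a12, a13, a14, a23, a24, a34⟩ := c
  obtain ⟨h12, h13, h14, h23, h24, h34⟩ := hc
  simp only [disc, triDisc] at hd h12 h13 h14 h23 h24 h34
  have m12 : a12 * a34 ≤ (a13 + a14) * (a23 + a24) := by
    have := le_add_add_of_triDisc_nonpos (p := a12 * a34) (q := a13 * a24) (r := a14 * a23)
      (s := a13 * a23 + a14 * a24) (by positivity)
      (by linarith [sq_nonneg (a13 * a23 - a14 * a24)]) (by unfold triDisc; linarith)
    linarith
  have m13 : a13 * a24 ≤ (a12 + a14) * (a23 + a34) := by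
    have := le_add_add_of_triDisc_nonpos (p := a13 * a24) (q := a12 * a34) (r := a14 * a23)
      (s := a12 * a23 + a14 * a34) (by positivity)
      (by linarith [sq_nonneg (a12 * a23 - a14 * a34)]) (by unfold triDisc; linarith)
    linarith
  have m23 : a14 * a23 ≤ (a12 + a24) * (a13 + a34) := by
    have := le_add_add_of_triDisc_nonpos (p := a14 * a23) (q := a12 * a34) (r := a13 * a24)
      (s := a12 * a13 + a24 * a34) (by positivity)
      (by linarith [sq_nonneg (a12 * a13 - a24 * a34)]) (by unfold triDisc; linarith)
    linarith
  set S := a12 + a13 + a14 + a23 + a24 + a34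
  have hS : 0 ≤ S := by positivity
  set r1 := a12 + a13 + a14
  set r2 := a12 + a23 + a24
  set r3 := a13 + a23 + a34
  -- `polar z 1 ^ 2 - 4 S quad z` is unchanged under `z ↦ z + s • 1`, so it is a form in the
  -- `z i - z 3`, with entries `rᵢ rⱼ - 2 S aᵢⱼ` (`rᵢ = ∑ⱼ aᵢⱼ`) and determinant `4 S² (-disc)`.
  have key := ternary_form_nonneg (sq_nonneg r1) (sq_nonneg r2) (sq_nonneg r3)
    (g₁₂ := r1 * r2 - 2 * S * a12) (g₁₃ := r1 * r3 - 2 * S * a13) (g₂₃ := r2 * r3 - 2 * S * a23)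
    (by linarith [mul_nonneg (mul_nonneg hS h12) (sub_nonneg.2 m12)])
    (by linarith [mul_nonneg (mul_nonneg hS h13) (sub_nonneg.2 m13)])
    (by linarith [mul_nonneg (mul_nonneg hS h23) (sub_nonneg.2 m23)])
    (by linarith [mul_nonneg (sq_nonneg S) (neg_nonneg.2 hd)])
    (z 0 - z 3) (z 1 - z 3) (z 2 - z 3)
  simp only [quad, polar, Pi.one_apply]
  linarith

theorem four_mul_quad_mul_quad_le {c : QuadCoeffs} (hc : c.Nonneg) (hd : c.disc ≤ 0)
    (x : Fin 4 → ℝ) {y : Fin 4 → ℝ} (hy : ∀ i, 0 < y i) :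
    4 * c.quad y * c.quad x ≤ c.polar x y ^ 2 := by
  have hy0 : ∀ i, y i ≠ 0 := fun i => (hy i).ne'
  have hd' : (c.rescale y).disc ≤ 0 := by
    rw [disc_rescale]
    exact mul_nonpos_of_nonneg_of_nonpos (sq_nonneg _) hd
  simpa only [quad_rescale_one, quad_rescale_div _ hy0, polar_rescale_div _ hy0] using
    four_mul_quad_one_mul_quad_le (hc.rescale fun i => (hy i).le) hd' (x / y)

lemma polar_sub_add_sq (v w : Fin 4 → ℝ) :
    c.polar (v - w) (v + w) ^ 2 - 4 * c.quad (v + w) * c.quad (v - w)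
      = 4 * (c.polar v w ^ 2 - 4 * c.quad v * c.quad w) := by
  simp only [quad, polar, Pi.add_apply, Pi.sub_apply]
  ring

theorem exists_polar_sq_lt {c : QuadCoeffs} (hc : c.Nonneg) (hd : 0 < c.disc) :
    ∃ x y : Fin 4 → ℝ, (∀ i, 0 < y i) ∧ c.polar x y ^ 2 < 4 * c.quad y * c.quad x := by
  have of_pair (v w : Fin 4 → ℝ) (hvw : ∀ i, 0 < v i + w i)
      (h : c.polar v w ^ 2 < 4 * c.quad v * c.quad w) :
      ∃ x y : Fin 4 → ℝ, (∀ i, 0 < y i) ∧ c.polar x y ^ 2 < 4 * c.quad y * c.quad x :=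
    ⟨v - w, v + w, hvw, by linarith [c.polar_sub_add_sq v w]⟩
  obtain ⟨a12, a13, a14, a23, a24, a34⟩ := c
  obtain ⟨h12, h13, h14, h23, h24, h34⟩ := hc
  simp only at h12 h13 h14 h23 h24 h34
  have hd' : 0 < triDisc (√(a12 * a34) ^ 2) (√(a13 * a24) ^ 2) (√(a14 * a23) ^ 2) := by
    rwa [Real.sq_sqrt (by positivity), Real.sq_sqrt (by positivity), Real.sq_sqrt (by positivity)]
  rcases lt_or_lt_or_lt_of_triDisc_sq_pos (Real.sqrt_nonneg _) (Real.sqrt_nonneg _)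
    (Real.sqrt_nonneg _) hd' with h | h | h
  · obtain ⟨l₁, l₂, m₁, m₂, hl₁, hl₂, hm₁, hm₂, hlt⟩ :=
      exists_sq_lt_of_sqrt_add_sqrt_lt (P := a12) (Q := a34) h13 h14 h23 h24 h
    refine of_pair ![l₁, l₂, 0, 0] ![0, 0, m₁, m₂] (by simp [Fin.forall_fin_succ, *]) ?_
    simp only [quad, polar, Matrix.cons_val_zero, Matrix.cons_val_one, Matrix.cons_val,
      mul_zero, zero_mul, add_zero, zero_add]
    linarith
  · obtain ⟨l₁, l₂, m₁, m₂, hl₁, hl₂, hm₁, hm₂, hlt⟩ :=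
      exists_sq_lt_of_sqrt_add_sqrt_lt (P := a13) (Q := a24) h12 h14 h23 h34 (by linarith)
    refine of_pair ![l₁, 0, l₂, 0] ![0, m₁, 0, m₂] (by simp [Fin.forall_fin_succ, *]) ?_
    simp only [quad, polar, Matrix.cons_val_zero, Matrix.cons_val_one, Matrix.cons_val,
      mul_zero, zero_mul, add_zero, zero_add]
    linarith
  · obtain ⟨l₁, l₂, m₁, m₂, hl₁, hl₂, hm₁, hm₂, hlt⟩ :=
      exists_sq_lt_of_sqrt_add_sqrt_lt (P := a14) (Q := a23) h12 h13 h24 h34 h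
    refine of_pair ![l₁, 0, 0, l₂] ![0, m₁, m₂, 0] (by simp [Fin.forall_fin_succ, *]) ?_
    simp only [quad, polar, Matrix.cons_val_zero, Matrix.cons_val_one, Matrix.cons_val,
      mul_zero, zero_mul, add_zero, zero_add]
    linarith

theorem isStable_iff_disc_nonpos {c : QuadCoeffs} (hc : c.Nonneg) :
    IsStable c.toMvPolynomial ↔ c.disc ≤ 0 := by
  rw [isStable_iff_forall_four_mul_quad_le hc]
  refine ⟨fun h => ?_, fun hd x y hy => four_mul_quad_mul_quad_le hc hd x hy⟩
  by_contra! hd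
  obtain ⟨x, y, hy, hlt⟩ := exists_polar_sq_lt hc hd
  linarith [h x y hy]

end QuadCoeffs

/-- A homogeneous quadratic multiaffine polynomial in four variables with nonnegative real
coefficients is stable iff the discriminant-type inequality holds.  Here `x₁ = X 0`, …,
`x₄ = X 3`. -/
theorem stable_iff_discriminant (a12 a13 a14 a23 a24 a34 : ℝ)
    (h12 : 0 ≤ a12) (h13 : 0 ≤ a13) (h14 : 0 ≤ a14)
    (h23 : 0 ≤ a23) (h24 : 0 ≤ a24) (h34 : 0 ≤ a34) :
    IsStable ((C (a12 : ℂ) * X 0 * X 1 + C (a13 : ℂ) * X 0 * X 2 + C (a14 : ℂ) * X 0 * X 3 +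
        C (a23 : ℂ) * X 1 * X 2 + C (a24 : ℂ) * X 1 * X 3 + C (a34 : ℂ) * X 2 * X 3 :
        MvPolynomial (Fin 4) ℂ)) ↔
      a12 ^ 2 * a34 ^ 2 + a13 ^ 2 * a24 ^ 2 + a14 ^ 2 * a23 ^ 2
          - 2 * a12 * a34 * a13 * a24 - 2 * a13 * a24 * a14 * a23
          - 2 * a12 * a34 * a14 * a23 ≤ 0 := by
  show IsStable (QuadCoeffs.toMvPolynomial ⟨a12, a13, a14, a23, a24, a34⟩) ↔ _
  rw [QuadCoeffs.isStable_iff_disc_nonpos ⟨h12, h13, h14, h23, h24, h34⟩, QuadCoeffs.disc,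
    triDisc]
  ring_nf

end
end

section
/- Let a₁₂, a₁₃, a₁₄, a₂₃, a₂₄, a₃₄ be nonnegative real numbers satisfying the Plücker relation a₁₂a₃₄ − a₁₃a₂₄ + a₁₄a₂₃ = 0. Then the polynomial f = a₁₂x₁x₂ + a₁₃x₁x₃ + a₁₄x₁x₄ + a₂₃x₂x₃ + a₂₄x₂x₄ + a₃₄x₃x₄ ∈ ℂ[x₁,x₂,x₃,x₄] is stable. -/
open MvPolynomial

noncomputable section

open Complex in
/-- Imaginary part of `A * B * (conj A + conj B)`. -/
private lemma im_abb (A B : ℂ) :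
    (A * B * ((starRingEnd ℂ) A + (starRingEnd ℂ) B)).im
      = Complex.normSq A * B.im + Complex.normSq B * A.im := by
  have h1 : A * B * ((starRingEnd ℂ) A + (starRingEnd ℂ) B)
      = ((Complex.normSq A : ℝ) : ℂ) * B + ((Complex.normSq B : ℝ) : ℂ) * A := by
    rw [← Complex.mul_conj A, ← Complex.mul_conj B]; ring
  rw [h1]
  simp [Complex.add_im, Complex.mul_im, Complex.ofReal_re, Complex.ofReal_im]

open Complex in
private lemma aux_e2 (a b c : ℝ) (x y z : ℂ)
    (hb : 0 ≤ b) (hc : 0 ≤ c)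
    (hx : 0 < x.im) (hy : 0 < y.im) (hz : 0 < z.im)
    (hpos : 0 < a ∨ 0 < b ∨ 0 < c)
    (ha : 0 ≤ a)
    (h : (a : ℂ) * (x * y) + (b : ℂ) * (x * z) + (c : ℂ) * (y * z) = 0) : False := by
  have hx0 : x ≠ 0 := fun h0 => by rw [h0] at hx; simp at hx
  have hy0 : y ≠ 0 := fun h0 => by rw [h0] at hy; simp at hy
  have hz0 : z ≠ 0 := fun h0 => by rw [h0] at hz; simp at hz
  have key : ((a * (normSq x * normSq y) : ℝ) : ℂ) * (starRingEnd ℂ) z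
      + ((b * (normSq x * normSq z) : ℝ) : ℂ) * (starRingEnd ℂ) y
      + ((c * (normSq y * normSq z) : ℝ) : ℂ) * (starRingEnd ℂ) x = 0 := by
    push_cast
    rw [← Complex.mul_conj x, ← Complex.mul_conj y, ← Complex.mul_conj z]
    linear_combination ((starRingEnd ℂ) x * (starRingEnd ℂ) y * (starRingEnd ℂ) z) * h
  have him := congrArg Complex.im key
  simp only [Complex.add_im, Complex.mul_im, Complex.ofReal_re, Complex.ofReal_im,
    Complex.conj_im, Complex.conj_re, Complex.zero_im, zero_mul, add_zero] at him
  have nx := Complex.normSq_pos.mpr hx0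
  have ny := Complex.normSq_pos.mpr hy0
  have nz := Complex.normSq_pos.mpr hz0
  rcases hpos with h' | h' | h' <;>
    nlinarith [mul_pos (mul_pos h' (mul_pos nx ny)) hz,
      mul_pos (mul_pos h' (mul_pos nx nz)) hy,
      mul_pos (mul_pos h' (mul_pos ny nz)) hx,
      mul_nonneg (mul_nonneg ha (mul_nonneg nx.le ny.le)) hz.le,
      mul_nonneg (mul_nonneg hb (mul_nonneg nx.le nz.le)) hy.le,
      mul_nonneg (mul_nonneg hc (mul_nonneg ny.le nz.le)) hx.le]

open Complex in
private lemma aux_lin (a b c : ℝ) (x y z w : ℂ)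
    (ha : 0 ≤ a) (hb : 0 ≤ b) (hc : 0 ≤ c)
    (hx : 0 < x.im) (hy : 0 < y.im) (hz : 0 < z.im) (hw : 0 < w.im)
    (hpos : 0 < a ∨ 0 < b ∨ 0 < c)
    (h : x * ((a : ℂ) * y + (b : ℂ) * z + (c : ℂ) * w) = 0) : False := by
  rcases mul_eq_zero.mp h with h0 | h0
  · rw [h0] at hx; simp at hx
  · have him := congrArg Complex.im h0
    simp only [Complex.add_im, Complex.mul_im, Complex.ofReal_re, Complex.ofReal_im,
      Complex.zero_im, zero_mul, add_zero] at him
    rcases hpos with h' | h' | h' <;>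
      nlinarith [mul_pos h' hy, mul_pos h' hz, mul_pos h' hw,
        mul_nonneg ha hy.le, mul_nonneg hb hz.le, mul_nonneg hc hw.le]

open Complex in
private lemma aux_quad (p q r s e : ℝ) (x y z w : ℂ)
    (hp : 0 < p) (hq : 0 ≤ q) (hr : 0 < r) (hs : 0 ≤ s) (he : 0 ≤ e)
    (hx : 0 < x.im) (hy : 0 < y.im) (hz : 0 < z.im) (hw : 0 < w.im)
    (h : ((p : ℂ) * x + (q : ℂ) * y) * ((r : ℂ) * z + (s : ℂ) * w)
        + (e : ℂ) * (x * y) = 0) : False := by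
  have hx0 : x ≠ 0 := fun h0 => by rw [h0] at hx; simp at hx
  have hy0 : y ≠ 0 := fun h0 => by rw [h0] at hy; simp at hy
  set C : ℂ := (r : ℂ) * z + (s : ℂ) * w with hC
  have hCim : 0 < C.im := by
    rw [hC]
    simp only [Complex.add_im, Complex.mul_im, Complex.ofReal_re, Complex.ofReal_im,
      zero_mul, add_zero]
    nlinarith [mul_pos hr hz, mul_nonneg hs hw.le]
  have hC0 : C ≠ 0 := fun h0 => by rw [h0] at hCim; simp at hCim
  have key : ((normSq C * (p * normSq x) : ℝ) : ℂ) * (starRingEnd ℂ) y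
      + ((normSq C * (q * normSq y) : ℝ) : ℂ) * (starRingEnd ℂ) x
      + ((e * (normSq x * normSq y) : ℝ) : ℂ) * (starRingEnd ℂ) C = 0 := by
    push_cast
    rw [← Complex.mul_conj x, ← Complex.mul_conj y, ← Complex.mul_conj C]
    linear_combination ((starRingEnd ℂ) x * (starRingEnd ℂ) y * (starRingEnd ℂ) C) * h
  have him := congrArg Complex.im key
  simp only [Complex.add_im, Complex.mul_im, Complex.ofReal_re, Complex.ofReal_im,
    Complex.conj_im, Complex.conj_re, Complex.zero_im, zero_mul, add_zero] at him
  have nx := Complex.normSq_pos.mpr hx0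
  have ny := Complex.normSq_pos.mpr hy0
  have nC := Complex.normSq_pos.mpr hC0
  nlinarith [mul_pos (mul_pos nC (mul_pos hp nx)) hy,
    mul_nonneg (mul_nonneg nC.le (mul_nonneg hq ny.le)) hx.le,
    mul_nonneg (mul_nonneg he (mul_nonneg nx.le ny.le)) hCim.le]

open Complex in
private lemma im_dabb (d : ℝ) (A B : ℂ) :
    ((d : ℂ) * (A * B * ((starRingEnd ℂ) A + (starRingEnd ℂ) B))).im
      = d * (Complex.normSq A * B.im + Complex.normSq B * A.im) := by
  rw [← im_abb A B]
  simp [Complex.mul_im, Complex.ofReal_re, Complex.ofReal_im]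

open Complex in
private lemma aux_chain (d1 d2 d3 : ℝ) (A1 B1 A2 B2 A3 B3 : ℂ)
    (hd1 : 0 ≤ d1) (hd2 : 0 < d2) (hd3 : 0 ≤ d3)
    (hZ1 : A1 + B1 = A2 + B2) (hZ3 : A3 + B3 = A2 + B2)
    (hA1 : 0 ≤ A1.im) (hB1 : 0 ≤ B1.im) (hA2 : 0 < A2.im) (hB2 : 0 < B2.im)
    (hA3 : 0 ≤ A3.im) (hB3 : 0 ≤ B3.im)
    (h : (d1 : ℂ) * (A1 * B1) + (d2 : ℂ) * (A2 * B2) + (d3 : ℂ) * (A3 * B3) = 0) :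
    False := by
  have key : (d1 : ℂ) * (A1 * B1 * ((starRingEnd ℂ) A1 + (starRingEnd ℂ) B1))
      + (d2 : ℂ) * (A2 * B2 * ((starRingEnd ℂ) A2 + (starRingEnd ℂ) B2))
      + (d3 : ℂ) * (A3 * B3 * ((starRingEnd ℂ) A3 + (starRingEnd ℂ) B3)) = 0 := by
    have e1 : (starRingEnd ℂ) A1 + (starRingEnd ℂ) B1
        = (starRingEnd ℂ) A2 + (starRingEnd ℂ) B2 := by
      rw [← map_add, ← map_add, hZ1]
    have e3 : (starRingEnd ℂ) A3 + (starRingEnd ℂ) B3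
        = (starRingEnd ℂ) A2 + (starRingEnd ℂ) B2 := by
      rw [← map_add, ← map_add, hZ3]
    rw [e1, e3]
    linear_combination ((starRingEnd ℂ) A2 + (starRingEnd ℂ) B2) * h
  have him := congrArg Complex.im key
  rw [Complex.add_im, Complex.add_im, im_dabb, im_dabb, im_dabb, Complex.zero_im] at him
  have hA20 : A2 ≠ 0 := fun h0 => by rw [h0] at hA2; simp at hA2
  have hB20 : B2 ≠ 0 := fun h0 => by rw [h0] at hB2; simp at hB2
  have nA2 := Complex.normSq_pos.mpr hA20
  have nB2 := Complex.normSq_pos.mpr hB20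
  nlinarith [mul_pos hd2 (add_pos (mul_pos nA2 hB2) (mul_pos nB2 hA2)),
    mul_nonneg hd1 (add_nonneg (mul_nonneg (Complex.normSq_nonneg A1) hB1)
      (mul_nonneg (Complex.normSq_nonneg B1) hA1)),
    mul_nonneg hd3 (add_nonneg (mul_nonneg (Complex.normSq_nonneg A3) hB3)
      (mul_nonneg (Complex.normSq_nonneg B3) hA3))]

/-- The `Gr(2,4)` case of the main theorem: a homogeneous quadratic multiaffine polynomial
whose nonnegative coefficients satisfy the Plücker relation is stable.  Here `x₁ = X 0`, …,
`x₄ = X 3`. -/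
theorem stable_of_plucker_gr24 (a12 a13 a14 a23 a24 a34 : ℝ)
    (h12 : 0 ≤ a12) (h13 : 0 ≤ a13) (h14 : 0 ≤ a14)
    (h23 : 0 ≤ a23) (h24 : 0 ≤ a24) (h34 : 0 ≤ a34)
    (hplucker : a12 * a34 - a13 * a24 + a14 * a23 = 0) :
    IsStable ((C (a12 : ℂ) * X 0 * X 1 + C (a13 : ℂ) * X 0 * X 2 + C (a14 : ℂ) * X 0 * X 3 +
        C (a23 : ℂ) * X 1 * X 2 + C (a24 : ℂ) * X 1 * X 3 + C (a34 : ℂ) * X 2 * X 3 :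
        MvPolynomial (Fin 4) ℂ)) := by
  by_cases hall : a12 = 0 ∧ a13 = 0 ∧ a14 = 0 ∧ a23 = 0 ∧ a24 = 0 ∧ a34 = 0
  · left
    obtain ⟨e1, e2, e3, e4, e5, e6⟩ := hall
    rw [e1, e2, e3, e4, e5, e6]
    simp
  · right
    intro u hu hzero
    have hev : MvPolynomial.eval u
        ((C (a12 : ℂ) * X 0 * X 1 + C (a13 : ℂ) * X 0 * X 2 + C (a14 : ℂ) * X 0 * X 3 +
        C (a23 : ℂ) * X 1 * X 2 + C (a24 : ℂ) * X 1 * X 3 + C (a34 : ℂ) * X 2 * X 3 :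
        MvPolynomial (Fin 4) ℂ))
        = (a12 : ℂ) * u 0 * u 1 + (a13 : ℂ) * u 0 * u 2 + (a14 : ℂ) * u 0 * u 3
          + (a23 : ℂ) * u 1 * u 2 + (a24 : ℂ) * u 1 * u 3 + (a34 : ℂ) * u 2 * u 3 := by
      simp [map_add, map_mul, eval_C, eval_X]
    rw [hev] at hzero
    set u0 := u 0
    set u1 := u 1
    set u2 := u 2
    set u3 := u 3
    have ht0 : 0 < u0.im := hu 0
    have ht1 : 0 < u1.im := hu 1
    have ht2 : 0 < u2.im := hu 2
    have ht3 : 0 < u3.im := hu 3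
    have hE : (a12 : ℂ) * u0 * u1 + (a13 : ℂ) * u0 * u2 + (a14 : ℂ) * u0 * u3
          + (a23 : ℂ) * u1 * u2 + (a24 : ℂ) * u1 * u3 + (a34 : ℂ) * u2 * u3 = 0 := hzero
    have hpc : (a12 : ℂ) * (a34 : ℂ) - (a13 : ℂ) * (a24 : ℂ) + (a14 : ℂ) * (a23 : ℂ) = 0 := by
      exact_mod_cast congrArg (fun r : ℝ => (r : ℂ)) hplucker
    by_cases hc : a13 * a24 = 0
    · -- boundary cases: a12*a34 = 0 and a14*a23 = 0 as well
      have hA : a12 * a34 = 0 := by nlinarith [mul_nonneg h12 h34, mul_nonneg h14 h23]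
      have hB : a14 * a23 = 0 := by nlinarith [mul_nonneg h12 h34, mul_nonneg h14 h23]
      rcases mul_eq_zero.mp hA with hz1 | hz1 <;> rcases mul_eq_zero.mp hB with hz2 | hz2 <;>
        rcases mul_eq_zero.mp hc with hz3 | hz3
      · -- a12 = 0, a14 = 0, a13 = 0 : e2 on u1,u2,u3
        have hpos : 0 < a23 ∨ 0 < a24 ∨ 0 < a34 := by
          by_contra hcon; push_neg at hcon
          exact hall ⟨hz1, hz3, hz2, le_antisymm hcon.1 h23, le_antisymm hcon.2.1 h24,
            le_antisymm hcon.2.2 h34⟩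
        have hc12 : (a12 : ℂ) = 0 := by exact_mod_cast congrArg (fun r : ℝ => (r : ℂ)) hz1
        have hc14 : (a14 : ℂ) = 0 := by exact_mod_cast congrArg (fun r : ℝ => (r : ℂ)) hz2
        have hc13 : (a13 : ℂ) = 0 := by exact_mod_cast congrArg (fun r : ℝ => (r : ℂ)) hz3
        exact aux_e2 a23 a24 a34 u1 u2 u3 h24 h34 ht1 ht2 ht3 hpos h23
          (by linear_combination hE - (u0 * u1) * hc12 - (u0 * u2) * hc13 - (u0 * u3) * hc14)
      · -- a12 = 0, a14 = 0, a24 = 0 : u2 * L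
        have hpos : 0 < a13 ∨ 0 < a23 ∨ 0 < a34 := by
          by_contra hcon; push_neg at hcon
          exact hall ⟨hz1, le_antisymm hcon.1 h13, hz2, le_antisymm hcon.2.1 h23, hz3,
            le_antisymm hcon.2.2 h34⟩
        have hc12 : (a12 : ℂ) = 0 := by exact_mod_cast congrArg (fun r : ℝ => (r : ℂ)) hz1
        have hc14 : (a14 : ℂ) = 0 := by exact_mod_cast congrArg (fun r : ℝ => (r : ℂ)) hz2
        have hc24 : (a24 : ℂ) = 0 := by exact_mod_cast congrArg (fun r : ℝ => (r : ℂ)) hz3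
        exact aux_lin a13 a23 a34 u2 u0 u1 u3 h13 h23 h34 ht2 ht0 ht1 ht3 hpos
          (by linear_combination hE - (u0 * u1) * hc12 - (u0 * u3) * hc14 - (u1 * u3) * hc24)
      · -- a12 = 0, a23 = 0, a13 = 0 : u3 * L
        have hpos : 0 < a14 ∨ 0 < a24 ∨ 0 < a34 := by
          by_contra hcon; push_neg at hcon
          exact hall ⟨hz1, hz3, le_antisymm hcon.1 h14, hz2, le_antisymm hcon.2.1 h24,
            le_antisymm hcon.2.2 h34⟩
        have hc12 : (a12 : ℂ) = 0 := by exact_mod_cast congrArg (fun r : ℝ => (r : ℂ)) hz1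
        have hc23 : (a23 : ℂ) = 0 := by exact_mod_cast congrArg (fun r : ℝ => (r : ℂ)) hz2
        have hc13 : (a13 : ℂ) = 0 := by exact_mod_cast congrArg (fun r : ℝ => (r : ℂ)) hz3
        exact aux_lin a14 a24 a34 u3 u0 u1 u2 h14 h24 h34 ht3 ht0 ht1 ht2 hpos
          (by linear_combination hE - (u0 * u1) * hc12 - (u0 * u2) * hc13 - (u1 * u2) * hc23)
      · -- a12 = 0, a23 = 0, a24 = 0 : e2 on u0,u2,u3
        have hpos : 0 < a13 ∨ 0 < a14 ∨ 0 < a34 := by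
          by_contra hcon; push_neg at hcon
          exact hall ⟨hz1, le_antisymm hcon.1 h13, le_antisymm hcon.2.1 h14, hz2, hz3,
            le_antisymm hcon.2.2 h34⟩
        have hc12 : (a12 : ℂ) = 0 := by exact_mod_cast congrArg (fun r : ℝ => (r : ℂ)) hz1
        have hc23 : (a23 : ℂ) = 0 := by exact_mod_cast congrArg (fun r : ℝ => (r : ℂ)) hz2
        have hc24 : (a24 : ℂ) = 0 := by exact_mod_cast congrArg (fun r : ℝ => (r : ℂ)) hz3
        exact aux_e2 a13 a14 a34 u0 u2 u3 h14 h34 ht0 ht2 ht3 hpos h13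
          (by linear_combination hE - (u0 * u1) * hc12 - (u1 * u2) * hc23 - (u1 * u3) * hc24)
      · -- a34 = 0, a14 = 0, a13 = 0 : u1 * L
        have hpos : 0 < a12 ∨ 0 < a23 ∨ 0 < a24 := by
          by_contra hcon; push_neg at hcon
          exact hall ⟨le_antisymm hcon.1 h12, hz3, hz2, le_antisymm hcon.2.1 h23,
            le_antisymm hcon.2.2 h24, hz1⟩
        have hc34 : (a34 : ℂ) = 0 := by exact_mod_cast congrArg (fun r : ℝ => (r : ℂ)) hz1
        have hc14 : (a14 : ℂ) = 0 := by exact_mod_cast congrArg (fun r : ℝ => (r : ℂ)) hz2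
        have hc13 : (a13 : ℂ) = 0 := by exact_mod_cast congrArg (fun r : ℝ => (r : ℂ)) hz3
        exact aux_lin a12 a23 a24 u1 u0 u2 u3 h12 h23 h24 ht1 ht0 ht2 ht3 hpos
          (by linear_combination hE - (u2 * u3) * hc34 - (u0 * u3) * hc14 - (u0 * u2) * hc13)
      · -- a34 = 0, a14 = 0, a24 = 0 : e2 on u0,u1,u2
        have hpos : 0 < a12 ∨ 0 < a13 ∨ 0 < a23 := by
          by_contra hcon; push_neg at hcon
          exact hall ⟨le_antisymm hcon.1 h12, le_antisymm hcon.2.1 h13, hz2,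
            le_antisymm hcon.2.2 h23, hz3, hz1⟩
        have hc34 : (a34 : ℂ) = 0 := by exact_mod_cast congrArg (fun r : ℝ => (r : ℂ)) hz1
        have hc14 : (a14 : ℂ) = 0 := by exact_mod_cast congrArg (fun r : ℝ => (r : ℂ)) hz2
        have hc24 : (a24 : ℂ) = 0 := by exact_mod_cast congrArg (fun r : ℝ => (r : ℂ)) hz3
        exact aux_e2 a12 a13 a23 u0 u1 u2 h13 h23 ht0 ht1 ht2 hpos h12
          (by linear_combination hE - (u2 * u3) * hc34 - (u0 * u3) * hc14 - (u1 * u3) * hc24)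
      · -- a34 = 0, a23 = 0, a13 = 0 : e2 on u0,u1,u3
        have hpos : 0 < a12 ∨ 0 < a14 ∨ 0 < a24 := by
          by_contra hcon; push_neg at hcon
          exact hall ⟨le_antisymm hcon.1 h12, hz3, le_antisymm hcon.2.1 h14, hz2,
            le_antisymm hcon.2.2 h24, hz1⟩
        have hc34 : (a34 : ℂ) = 0 := by exact_mod_cast congrArg (fun r : ℝ => (r : ℂ)) hz1
        have hc23 : (a23 : ℂ) = 0 := by exact_mod_cast congrArg (fun r : ℝ => (r : ℂ)) hz2
        have hc13 : (a13 : ℂ) = 0 := by exact_mod_cast congrArg (fun r : ℝ => (r : ℂ)) hz3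
        exact aux_e2 a12 a14 a24 u0 u1 u3 h14 h24 ht0 ht1 ht3 hpos h12
          (by linear_combination hE - (u2 * u3) * hc34 - (u1 * u2) * hc23 - (u0 * u2) * hc13)
      · -- a34 = 0, a23 = 0, a24 = 0 : u0 * L
        have hpos : 0 < a12 ∨ 0 < a13 ∨ 0 < a14 := by
          by_contra hcon; push_neg at hcon
          exact hall ⟨le_antisymm hcon.1 h12, le_antisymm hcon.2.1 h13,
            le_antisymm hcon.2.2 h14, hz2, hz3, hz1⟩
        have hc34 : (a34 : ℂ) = 0 := by exact_mod_cast congrArg (fun r : ℝ => (r : ℂ)) hz1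
        have hc23 : (a23 : ℂ) = 0 := by exact_mod_cast congrArg (fun r : ℝ => (r : ℂ)) hz2
        have hc24 : (a24 : ℂ) = 0 := by exact_mod_cast congrArg (fun r : ℝ => (r : ℂ)) hz3
        exact aux_lin a12 a13 a14 u0 u1 u2 u3 h12 h13 h14 ht0 ht1 ht2 ht3 hpos
          (by linear_combination hE - (u2 * u3) * hc34 - (u1 * u2) * hc23 - (u1 * u3) * hc24)
    · -- main case: a13 > 0 and a24 > 0
      have h13ne : a13 ≠ 0 := left_ne_zero_of_mul hc
      have h24ne : a24 ≠ 0 := right_ne_zero_of_mul hc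
      have ha13 : 0 < a13 := h13.lt_of_ne (Ne.symm h13ne)
      have ha24 : 0 < a24 := h24.lt_of_ne (Ne.symm h24ne)
      by_cases h14z : a14 = 0
      · -- a14 = 0 : a12*a34 = a13*a24 > 0
        have hprod : a12 * a34 = a13 * a24 := by rw [h14z] at hplucker; linarith
        have ha12 : 0 < a12 := by
          rcases h12.lt_or_eq with h' | h'
          · exact h'
          · exfalso; nlinarith [mul_pos ha13 ha24]
        have hc14 : (a14 : ℂ) = 0 := by exact_mod_cast congrArg (fun r : ℝ => (r : ℂ)) h14z
        exact aux_quad a12 a13 a12 a24 (a12 * a23) u1 u2 u0 u3 ha12 h13 ha12 h24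
          (mul_nonneg h12 h23) ht1 ht2 ht0 ht3
          (by push_cast
              linear_combination (a12 : ℂ) * hE - (u2 * u3) * hpc
                + ((a23 : ℂ) * (u2 * u3) - (a12 : ℂ) * (u0 * u3)) * hc14)
      · have ha14 : 0 < a14 := h14.lt_of_ne (Ne.symm h14z)
        by_cases h23z : a23 = 0
        · -- a23 = 0 : a12*a34 = a13*a24 > 0
          have hprod : a12 * a34 = a13 * a24 := by rw [h23z] at hplucker; linarith
          have ha12 : 0 < a12 := by
            rcases h12.lt_or_eq with h' | h'
            · exact h'
            · exfalso; nlinarith [mul_pos ha13 ha24]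
          have hc23 : (a23 : ℂ) = 0 := by exact_mod_cast congrArg (fun r : ℝ => (r : ℂ)) h23z
          exact aux_quad a12 a24 a12 a13 (a12 * a14) u0 u3 u1 u2 ha12 h24 ha12 h13
            (mul_nonneg h12 h14) ht0 ht3 ht1 ht2
            (by push_cast
                linear_combination (a12 : ℂ) * hE - (u2 * u3) * hpc
                  + ((a14 : ℂ) * (u2 * u3) - (a12 : ℂ) * (u1 * u2)) * hc23)
        · -- generic case: a13, a24, a14, a23 all positive : chain identity
          have ha23 : 0 < a23 := h23.lt_of_ne (Ne.symm h23z)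
          exact aux_chain (a12 * (a13 + a34)) (a14 * a23) (a34 * (a12 + a24))
            (((a14 : ℝ) : ℂ) * u0)
            (((a12 + a24 : ℝ) : ℂ) * u1 + ((a13 + a34 : ℝ) : ℂ) * u2 + ((a14 : ℝ) : ℂ) * u3)
            (((a14 : ℝ) : ℂ) * u0 + ((a12 + a24 : ℝ) : ℂ) * u1)
            (((a13 + a34 : ℝ) : ℂ) * u2 + ((a14 : ℝ) : ℂ) * u3)
            (((a14 : ℝ) : ℂ) * u0 + ((a12 + a24 : ℝ) : ℂ) * u1 + ((a13 + a34 : ℝ) : ℂ) * u2)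
            (((a14 : ℝ) : ℂ) * u3)
            (mul_nonneg h12 (by linarith)) (mul_pos ha14 ha23)
            (mul_nonneg h34 (by linarith))
            (by ring) (by ring)
            (by simp only [Complex.mul_im, Complex.ofReal_re, Complex.ofReal_im, zero_mul,
                  add_zero]
                positivity)
            (by simp only [Complex.add_im, Complex.mul_im, Complex.ofReal_re,
                  Complex.ofReal_im, zero_mul, add_zero]
                nlinarith [mul_nonneg (by linarith : (0:ℝ) ≤ a12 + a24) ht1.le,
                  mul_nonneg (by linarith : (0:ℝ) ≤ a13 + a34) ht2.le,
                  mul_nonneg h14 ht3.le])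
            (by simp only [Complex.add_im, Complex.mul_im, Complex.ofReal_re,
                  Complex.ofReal_im, zero_mul, add_zero]
                nlinarith [mul_pos ha14 ht0, mul_nonneg (by linarith : (0:ℝ) ≤ a12 + a24) ht1.le])
            (by simp only [Complex.add_im, Complex.mul_im, Complex.ofReal_re,
                  Complex.ofReal_im, zero_mul, add_zero]
                nlinarith [mul_pos ha14 ht3, mul_nonneg (by linarith : (0:ℝ) ≤ a13 + a34) ht2.le])
            (by simp only [Complex.add_im, Complex.mul_im, Complex.ofReal_re,
                  Complex.ofReal_im, zero_mul, add_zero]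
                nlinarith [mul_nonneg h14 ht0.le, mul_nonneg (by linarith : (0:ℝ) ≤ a12 + a24) ht1.le,
                  mul_nonneg (by linarith : (0:ℝ) ≤ a13 + a34) ht2.le])
            (by simp only [Complex.mul_im, Complex.ofReal_re, Complex.ofReal_im, zero_mul,
                  add_zero]
                positivity)
            (by push_cast
                linear_combination ((a14 : ℂ) * ((a12 : ℂ) + (a24 : ℂ))
                    * ((a13 : ℂ) + (a34 : ℂ))) * hE
                  + ((a14 : ℂ) * (((a13 : ℂ) + (a34 : ℂ)) * (u0 * u2)
                    + ((a12 : ℂ) + (a24 : ℂ)) * (u1 * u3)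
                    + (a14 : ℂ) * (u0 * u3))) * hpc)
end
end

section
/- Let M be an n×k complex matrix. Then the polynomial Σ_{I ⊆ [n], |I|=k} |det(M[I])|² · x^I ∈ ℂ[x₁,…,xₙ] is stable. -/
open MvPolynomial Matrix Finset Equiv

noncomputable section

/-- The maximal minor `det (M[I])` of an `n × k` matrix `M` with row set `I`
(rows taken in increasing order); `0` if `I` does not have exactly `k` elements. -/
def minorRow {n k : ℕ} (M : Matrix (Fin n) (Fin k) ℂ) (I : Finset (Fin n)) : ℂ :=
  if h : I.card = k then
    Matrix.det (Matrix.of fun a b : Fin k => M ((I.orderIsoOfFin h) a) b)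
  else 0

def colMinor {n k : ℕ} (A : Matrix (Fin k) (Fin n) ℂ) (I : Finset (Fin n)) : ℂ :=
  if h : I.card = k then
    Matrix.det (Matrix.of fun a b : Fin k => A a ((I.orderIsoOfFin h) b))
  else 0

lemma det_step1 {n k : ℕ} (A : Matrix (Fin k) (Fin n) ℂ) (B : Matrix (Fin n) (Fin k) ℂ) :
    (A * B).det = ∑ f : Fin k → Fin n, (∏ i, A i (f i)) * (B.submatrix f id).det := by
  have h0 : (A * B).det
      = Matrix.detRowAlternating (R := ℂ) (n := Fin k) (fun i => ∑ j : Fin n, A i j • B j) := by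
    unfold Matrix.det
    congr 1
    ext i x
    simp [Matrix.mul_apply, Matrix.vecMul, dotProduct]
  rw [h0]
  calc (Matrix.detRowAlternating (R := ℂ) (n := Fin k)).toMultilinearMap
        (fun i => ∑ j : Fin n, A i j • B j)
      = ∑ f : Fin k → Fin n, (Matrix.detRowAlternating (R := ℂ) (n := Fin k)).toMultilinearMap
          (fun i => A i (f i) • B (f i)) :=
        MultilinearMap.map_sum _ _
    _ = ∑ f : Fin k → Fin n, (∏ i, A i (f i)) * (B.submatrix f id).det := by
        refine Finset.sum_congr rfl fun f _ => ?_
        rw [MultilinearMap.map_smul_univ]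
        simp only [smul_eq_mul]
        rfl

lemma image_orderIsoOfFin {n k : ℕ} (I : Finset (Fin n)) (h : I.card = k) :
    Finset.image (fun a => ((I.orderIsoOfFin h) a : Fin n)) Finset.univ = I := by
  ext y
  simp only [Finset.mem_image, Finset.mem_univ, true_and]
  constructor
  · rintro ⟨a, rfl⟩; exact (I.orderIsoOfFin h a).2
  · intro hy; exact ⟨(I.orderIsoOfFin h).symm ⟨y, hy⟩, by simp⟩

lemma cauchyBinet {n k : ℕ} (A : Matrix (Fin k) (Fin n) ℂ) (B : Matrix (Fin n) (Fin k) ℂ) :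
    (A * B).det = ∑ I ∈ Finset.powersetCard k (Finset.univ : Finset (Fin n)),
      colMinor A I * minorRow B I := by
  classical
  rw [det_step1]
  have hz : ∀ f ∈ (Finset.univ : Finset (Fin k → Fin n)),
      ¬ Function.Injective f → (∏ i, A i (f i)) * (B.submatrix f id).det = 0 := by
    intro f _ hf
    rw [Function.not_injective_iff] at hf
    obtain ⟨a, b, hab, hne⟩ := hf
    have : (B.submatrix f id).det = 0 :=
      Matrix.det_zero_of_row_eq hne (by ext j; simp [hab])
    rw [this, mul_zero]
  rw [← Finset.sum_filter_of_ne (p := fun f => Function.Injective f)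
    (fun f hf hne => by by_contra h; exact hne (hz f hf h))]
  rw [← Finset.sum_fiberwise_of_maps_to (g := fun f => Finset.image f Finset.univ)
    (t := Finset.powersetCard k (Finset.univ : Finset (Fin n)))
    (fun f hf => by
      simp only [Finset.mem_filter] at hf
      rw [Finset.mem_powersetCard]
      exact ⟨Finset.subset_univ _, by
        rw [Finset.card_image_of_injective _ hf.2, Finset.card_univ, Fintype.card_fin]⟩)]
  refine Finset.sum_congr rfl fun I hI => ?_
  rw [Finset.mem_powersetCard] at hI
  obtain ⟨-, hcard⟩ := hI
  set g : Fin k → Fin n := fun a => ((I.orderIsoOfFin hcard) a : Fin n) with hg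
  have hginj : Function.Injective g := fun a b hab =>
    (I.orderIsoOfFin hcard).injective (Subtype.ext hab)
  -- bijection with permutations
  have hbij : ∑ f ∈ (Finset.univ.filter (fun f => Function.Injective f)).filter
        (fun f => Finset.image f Finset.univ = I),
        (∏ i, A i (f i)) * (B.submatrix f id).det
      = ∑ σ : Equiv.Perm (Fin k),
        (∏ i, A i (g (σ i))) * (B.submatrix (g ∘ σ) id).det := by
    refine (Finset.sum_bij (fun (σ : Equiv.Perm (Fin k)) (_ : σ ∈ (Finset.univ : Finset (Equiv.Perm (Fin k)))) => (g ∘ σ : Fin k → Fin n)) ?_ ?_ ?_ ?_).symm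
    · intro σ _
      simp only [Finset.mem_filter, Finset.mem_univ, true_and]
      constructor
      · exact hginj.comp σ.injective
      · rw [show Finset.image (g ∘ σ) Finset.univ = Finset.image g (Finset.image σ Finset.univ) by
          rw [Finset.image_image], Finset.image_univ_equiv, image_orderIsoOfFin]
    · intro σ₁ _ σ₂ _ h
      exact Equiv.ext fun x => hginj (congrFun h x)
    · intro f hf
      simp only [Finset.mem_filter, Finset.mem_univ, true_and] at hf
      obtain ⟨hfinj, hfim⟩ := hf
      have hmem : ∀ x, f x ∈ I := fun x => by
        rw [← hfim]; exact Finset.mem_image_of_mem f (Finset.mem_univ x)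
      set τ : Fin k → Fin k := fun x => (I.orderIsoOfFin hcard).symm ⟨f x, hmem x⟩ with hτ
      have hτinj : Function.Injective τ := by
        intro a b hab
        apply hfinj
        have := congrArg (fun z => ((I.orderIsoOfFin hcard) z : Fin n)) hab
        simpa [hτ] using this
      refine ⟨Equiv.ofBijective τ (Finite.injective_iff_bijective.mp hτinj),
        Finset.mem_univ _, ?_⟩
      funext x
      show ((I.orderIsoOfFin hcard) ((I.orderIsoOfFin hcard).symm ⟨f x, hmem x⟩) : Fin n) = f x
      rw [OrderIso.apply_symm_apply]
    · intro σ _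
      rfl
  rw [hbij]
  have hsub : ∀ σ : Equiv.Perm (Fin k),
      (B.submatrix (g ∘ σ) id).det = (Equiv.Perm.sign σ : ℂ) * (B.submatrix g id).det := by
    intro σ
    have : B.submatrix (g ∘ σ) id = (B.submatrix g id).submatrix σ id := by
      ext a b; simp
    rw [this, Matrix.det_permute]
  have hcol : colMinor A I = ∑ σ : Equiv.Perm (Fin k),
      (Equiv.Perm.sign σ : ℂ) * ∏ i, A i (g (σ i)) := by
    rw [colMinor, dif_pos hcard, ← Matrix.det_transpose, Matrix.det_apply']
    refine Finset.sum_congr rfl fun σ _ => ?_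
    norm_cast
  rw [hcol, minorRow, dif_pos hcard, Finset.sum_mul]
  refine Finset.sum_congr rfl fun σ _ => ?_
  rw [hsub σ]
  have : (Matrix.of fun a b : Fin k => B ((I.orderIsoOfFin hcard) a) b) = B.submatrix g id := by
    ext a b; simp [hg]
  rw [this]
  ring

/-- The polynomial `∑_{|I| = k} |det M[I]|² x^I` is stable for any `n × k` complex matrix. -/
theorem sum_normSq_minors_stable {n k : ℕ} (M : Matrix (Fin n) (Fin k) ℂ) :
    IsStable (∑ I ∈ Finset.powersetCard k (Finset.univ : Finset (Fin n)),
      C ((Complex.normSq (minorRow M I) : ℂ)) * ∏ i ∈ I, X i) := by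
  classical
  by_cases hz : ∀ I ∈ Finset.powersetCard k (Finset.univ : Finset (Fin n)), minorRow M I = 0
  · left
    refine Finset.sum_eq_zero fun I hI => ?_
    rw [hz I hI]
    simp
  · right
    push_neg at hz
    obtain ⟨I₀, hI₀, hmin₀⟩ := hz
    intro u hu hev
    -- the matrix A = Mᴴ * diagonal u
    set A : Matrix (Fin k) (Fin n) ℂ :=
      Matrix.of fun a j => (starRingEnd ℂ) (M j a) * u j with hA
    -- evaluation equals det (A * M)
    have heval : (MvPolynomial.eval u)
        (∑ I ∈ Finset.powersetCard k (Finset.univ : Finset (Fin n)),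
          C ((Complex.normSq (minorRow M I) : ℂ)) * ∏ i ∈ I, X i)
        = (A * M).det := by
      rw [cauchyBinet]
      rw [map_sum]
      refine Finset.sum_congr rfl fun I hI => ?_
      have hcard : I.card = k := (Finset.mem_powersetCard.mp hI).2
      set g : Fin k → Fin n := fun a => ((I.orderIsoOfFin hcard) a : Fin n) with hg
      have hginj : Function.Injective g := fun a b hab =>
        (I.orderIsoOfFin hcard).injective (Subtype.ext hab)
      have hcol : colMinor A I
          = (∏ i ∈ I, u i) * (starRingEnd ℂ) (minorRow M I) := by
        rw [colMinor, dif_pos hcard]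
        have h1 : (Matrix.of fun a b : Fin k => A a (g b))
            = Matrix.of fun a b : Fin k => u (g b) *
              ((Matrix.of fun a' b' : Fin k => (starRingEnd ℂ) (M (g b') a')) a b) := by
          ext a b
          simp [hA, mul_comm]
        rw [show (Matrix.of fun a b : Fin k => A a ((I.orderIsoOfFin hcard) b))
            = (Matrix.of fun a b : Fin k => A a (g b)) from rfl, h1,
          Matrix.det_mul_row]
        have h2 : (Matrix.of fun a' b' : Fin k => (starRingEnd ℂ) (M (g b') a'))
            = ((starRingEnd ℂ).mapMatrix (Matrix.of fun a b : Fin k => M (g a) b))ᵀ := by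
          ext a b
          simp
        rw [h2, Matrix.det_transpose, ← RingHom.map_det]
        have h3 : ∏ b : Fin k, u (g b) = ∏ i ∈ I, u i := by
          rw [← image_orderIsoOfFin I hcard, Finset.prod_image
            (fun a _ b _ hab => hginj hab)]
        rw [h3, minorRow, dif_pos hcard]
      rw [hcol]
      have : MvPolynomial.eval u (C ((Complex.normSq (minorRow M I) : ℂ)) * ∏ i ∈ I, X i)
          = (Complex.normSq (minorRow M I) : ℂ) * ∏ i ∈ I, u i := by
        simp [MvPolynomial.eval_prod]
      rw [this, Complex.normSq_eq_conj_mul_self]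
      ring
    rw [heval] at hev
    obtain ⟨v, hv, hAMv⟩ := Matrix.exists_mulVec_eq_zero_iff.mpr hev
    set w : Fin n → ℂ := M *ᵥ v with hw
    -- w ≠ 0 since some minor is nonzero
    have hwne : w ≠ 0 := by
      intro hw0
      apply hv
      have hcard₀ : I₀.card = k := (Finset.mem_powersetCard.mp hI₀).2
      set N : Matrix (Fin k) (Fin k) ℂ :=
        Matrix.of fun a b : Fin k => M ((I₀.orderIsoOfFin hcard₀) a) b with hN
      have hNdet : N.det ≠ 0 := by
        rw [minorRow, dif_pos hcard₀] at hmin₀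
        exact hmin₀
      have hNv : N *ᵥ v = 0 := by
        funext a
        have : (N *ᵥ v) a = w ((I₀.orderIsoOfFin hcard₀) a) := by
          simp [hN, hw, Matrix.mulVec, dotProduct]
        rw [this, hw0]
        rfl
      by_contra hv0
      exact hNdet (Matrix.exists_mulVec_eq_zero_iff.mp ⟨v, hv0, hNv⟩)
    -- A = Mᴴ * diagonal u
    have hAdiag : A = Mᴴ * Matrix.diagonal u := by
      ext a j
      rw [Matrix.mul_diagonal]
      rfl
    -- the quadratic form
    have hS : star v ⬝ᵥ ((A * M) *ᵥ v) = ∑ i, (u i) * (Complex.normSq (w i) : ℂ) := by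
      rw [hAdiag, Matrix.mul_assoc, ← Matrix.mulVec_mulVec,
        Matrix.dotProduct_mulVec, ← Matrix.star_mulVec, ← hw, ← Matrix.mulVec_mulVec]
      simp only [dotProduct, Pi.star_apply, Matrix.mulVec_diagonal, ← hw]
      refine Finset.sum_congr rfl fun i _ => ?_
      rw [Complex.normSq_eq_conj_mul_self]
      show (starRingEnd ℂ) (w i) * (u i * w i) = _
      ring
    rw [hAMv, dotProduct_zero] at hS
    have him : (0 : ℝ) = ∑ i, (u i).im * Complex.normSq (w i) := by
      have := congrArg Complex.im hS
      rw [Complex.zero_im, Complex.im_sum] at this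
      rw [this]
      refine Finset.sum_congr rfl fun i _ => ?_
      simp [Complex.mul_im]
    have hterm : ∀ i ∈ (Finset.univ : Finset (Fin n)),
        (0 : ℝ) ≤ (u i).im * Complex.normSq (w i) :=
      fun i _ => mul_nonneg (le_of_lt (hu i)) (Complex.normSq_nonneg _)
    have hall : ∀ i ∈ (Finset.univ : Finset (Fin n)),
        (u i).im * Complex.normSq (w i) = 0 :=
      (Finset.sum_eq_zero_iff_of_nonneg hterm).mp him.symm
    apply hwne
    funext i
    have h0 := hall i (Finset.mem_univ i)
    have : Complex.normSq (w i) = 0 := by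
      rcases mul_eq_zero.mp h0 with h | h
      · exact absurd h (ne_of_gt (hu i))
      · exact h
    exact Complex.normSq_eq_zero.mp this
end
end

section
/- There is no 6×2 complex matrix M such that, setting a_{ij} := |det(M[{i,j}])|² for 1 ≤ i < j ≤ 6, all a_{ij} are strictly positive and the Plücker relations a_{ik}a_{jl} = a_{ij}a_{kl} + a_{il}a_{jk} hold for all 1 ≤ i < j < k < l ≤ 6. (That is, no point of the totally positive Grassmannian Gr_{>0}(2,6) is represented by a polynomial whose coefficients are squared absolute values of the 2×2 minors of a matrix.) -/
noncomputable section

/-- The `2 × 2` minor of a `6 × 2` complex matrix `M` with rows `i` and `j`. -/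
def minor2 (M : Matrix (Fin 6) (Fin 2) ℂ) (i j : Fin 6) : ℂ :=
  M i 0 * M j 1 - M i 1 * M j 0

/-- The real part of a product of five purely imaginary complex numbers (two of them
conjugated) vanishes. -/
lemma imag5 (a b c d e : ℂ) (ha : a.re = 0) (hb : b.re = 0) (hc : c.re = 0)
    (hd : d.re = 0) (he : e.re = 0) :
    (a * (starRingEnd ℂ) b * c * (starRingEnd ℂ) d * e).re = 0 := by
  simp [Complex.mul_re, Complex.mul_im, ha, hb, hc, hd, he]

/-- No point of the totally positive Grassmannian `Gr_{>0}(2,6)` is represented by a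
polynomial whose coefficients are the squared absolute values of the `2 × 2` minors of
a matrix: there is no `6 × 2` complex matrix `M` such that the quantities
`a_{ij} = |det M[{i,j}]|²` are all strictly positive and satisfy the Plücker relations. -/
theorem no_normSq_representation_of_totally_positive :
    ¬ ∃ M : Matrix (Fin 6) (Fin 2) ℂ,
      (∀ i j : Fin 6, i < j → 0 < Complex.normSq (minor2 M i j)) ∧
      (∀ i j k l : Fin 6, i < j → j < k → k < l →
        Complex.normSq (minor2 M i k) * Complex.normSq (minor2 M j l) =
          Complex.normSq (minor2 M i j) * Complex.normSq (minor2 M k l) +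
            Complex.normSq (minor2 M i l) * Complex.normSq (minor2 M j k)) := by
  rintro ⟨M, hpos, hrel⟩
  -- The complex minors themselves satisfy the Plücker relations (a polynomial identity).
  have plck : ∀ i j k l : Fin 6, minor2 M i k * minor2 M j l =
      minor2 M i j * minor2 M k l + minor2 M i l * minor2 M j k := by
    intro i j k l; simp only [minor2]; ring
  -- Hence for each quadruple, `p_ij p_kl` and `p_il p_jk` are orthogonal as complex numbers.
  have key : ∀ i j k l : Fin 6, i < j → j < k → k < l →
      ((minor2 M i j * minor2 M k l) *
        (starRingEnd ℂ) (minor2 M i l * minor2 M j k)).re = 0 := by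
    intro i j k l hij hjk hkl
    have h := hrel i j k l hij hjk hkl
    have h2 : Complex.normSq (minor2 M i j * minor2 M k l + minor2 M i l * minor2 M j k)
        = Complex.normSq (minor2 M i j * minor2 M k l)
          + Complex.normSq (minor2 M i l * minor2 M j k) := by
      rw [← plck]; simpa [Complex.normSq_mul] using h
    rw [Complex.normSq_add] at h2
    linarith
  have q1 := key 0 1 2 3 (by decide) (by decide) (by decide)
  have q2 := key 0 1 2 4 (by decide) (by decide) (by decide)
  have q3 := key 0 2 3 4 (by decide) (by decide) (by decide)
  have q4 := key 0 2 4 5 (by decide) (by decide) (by decide)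
  have q5 := key 0 3 4 5 (by decide) (by decide) (by decide)
  -- A suitable product of five such purely imaginary numbers has zero real part...
  have hz := imag5 _ _ _ _ _ q1 q2 q3 q4 q5
  -- ...but this product is in fact a positive real number.
  have hprod :
      (minor2 M 0 1 * minor2 M 2 3) * (starRingEnd ℂ) (minor2 M 0 3 * minor2 M 1 2)
      * (starRingEnd ℂ) ((minor2 M 0 1 * minor2 M 2 4) * (starRingEnd ℂ) (minor2 M 0 4 * minor2 M 1 2))
      * ((minor2 M 0 2 * minor2 M 3 4) * (starRingEnd ℂ) (minor2 M 0 4 * minor2 M 2 3))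
      * (starRingEnd ℂ) ((minor2 M 0 2 * minor2 M 4 5) * (starRingEnd ℂ) (minor2 M 0 5 * minor2 M 2 4))
      * ((minor2 M 0 3 * minor2 M 4 5) * (starRingEnd ℂ) (minor2 M 0 5 * minor2 M 3 4))
      = ((Complex.normSq (minor2 M 0 1) * Complex.normSq (minor2 M 0 2)
          * Complex.normSq (minor2 M 0 3) * Complex.normSq (minor2 M 0 4)
          * Complex.normSq (minor2 M 0 5) * Complex.normSq (minor2 M 1 2)
          * Complex.normSq (minor2 M 2 3) * Complex.normSq (minor2 M 2 4)
          * Complex.normSq (minor2 M 3 4) * Complex.normSq (minor2 M 4 5) : ℝ) : ℂ) := by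
    simp only [Complex.ofReal_mul, ← Complex.mul_conj, map_mul, Complex.conj_conj]
    ring
  rw [hprod, Complex.ofReal_re] at hz
  have : (0:ℝ) < Complex.normSq (minor2 M 0 1) * Complex.normSq (minor2 M 0 2)
          * Complex.normSq (minor2 M 0 3) * Complex.normSq (minor2 M 0 4)
          * Complex.normSq (minor2 M 0 5) * Complex.normSq (minor2 M 1 2)
          * Complex.normSq (minor2 M 2 3) * Complex.normSq (minor2 M 2 4)
          * Complex.normSq (minor2 M 3 4) * Complex.normSq (minor2 M 4 5) := by
    have h01 := hpos 0 1 (by decide)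
    have h02 := hpos 0 2 (by decide)
    have h03 := hpos 0 3 (by decide)
    have h04 := hpos 0 4 (by decide)
    have h05 := hpos 0 5 (by decide)
    have h12 := hpos 1 2 (by decide)
    have h23 := hpos 2 3 (by decide)
    have h24 := hpos 2 4 (by decide)
    have h34 := hpos 3 4 (by decide)
    have h45 := hpos 4 5 (by decide)
    positivity
  linarith
end
end

section
/- Let Z be a real n×n matrix that is tridiagonal (Z_{ij} = 0 whenever |i−j| > 1) with nonnegative off-diagonal entries (Z_{ij} ≥ 0 for i ≠ j). Then for every t ≥ 0: (1) the matrix exponential exp(tZ) is totally nonnegative; and (2) exp(t·D(Z)) = Comp(exp(tZ)), where D(Z) and Comp are the subset-indexed matrices defined in the context. -/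
noncomputable section

/-- The minor `det B[J, I]` of a square real matrix `B` with row set `J` and column set `I`
(rows and columns taken in increasing order); `0` if `J` and `I` have different sizes. -/
def minorJI {n : ℕ} (B : Matrix (Fin n) (Fin n) ℝ) (J I : Finset (Fin n)) : ℝ :=
  if h : J.card = I.card then
    Matrix.det (Matrix.of fun a b : Fin I.card =>
      B ((J.orderIsoOfFin h) a) ((I.orderIsoOfFin rfl) b))
  else 0

/-- A real square matrix is totally nonnegative if all of its minors are nonnegative. -/
def TotallyNonneg {n : ℕ} (B : Matrix (Fin n) (Fin n) ℝ) : Prop :=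
  ∀ J I : Finset (Fin n), J.card = I.card → 0 ≤ minorJI B J I

/-- The compound matrix `Comp(B)`, indexed by subsets of `[n]`, with entries
`Comp(B)_{J,I} = det B[J,I]` when `|J| = |I|` and `0` otherwise; this is the matrix of the
operator `B_#` in the basis of multiaffine monomials. -/
def Comp {n : ℕ} (B : Matrix (Fin n) (Fin n) ℝ) :
    Matrix (Finset (Fin n)) (Finset (Fin n)) ℝ :=
  fun J I => minorJI B J I

/-- The matrix `D(Z)` of the infinitesimal operator `δ_Z`, indexed by subsets of `[n]`:
`D(Z)_{I,I} = ∑_{j ∈ I} Z_{jj}`; `D(Z)_{J,I} = Z_{ij}` when `J = (I ∖ {j}) ∪ {i}` for some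
`j ∈ I`, `i ∉ I` (equivalently `I ∖ J = {j}` and `J ∖ I = {i}`); and `0` otherwise. -/
def DZ {n : ℕ} (Z : Matrix (Fin n) (Fin n) ℝ) :
    Matrix (Finset (Fin n)) (Finset (Fin n)) ℝ :=
  fun J I =>
    if J = I then ∑ j ∈ I, Z j j
    else if (I \ J).card = 1 ∧ (J \ I).card = 1 then
      ∑ j ∈ I \ J, ∑ i ∈ J \ I, Z i j
    else 0



/-!
Write `B s = exp (s • Z)`, so that `B' = Z * B`. Differentiating the minor `det B[J, I]` row by
row and expanding the rows of `Z * B`, row `j ∈ J` is replaced by row `m` with weight `Z j m`.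
For `m ∈ J` the determinant has a repeated row unless `m = j`; for `m ∉ J` tridiagonality leaves
only the neighbours of `j`, and swapping a neighbour into `J` keeps the rows in increasing order.
The result is exactly `(D(Z) * Comp (B s)) J I`, so `Comp (B s)` solves `F' = D(Z) * F`,
`F 0 = 1`, whence `Comp (exp (s • Z)) = exp (s • D(Z))`. Finally `D(Z)` has nonnegative
off-diagonal entries, and the exponential of such a matrix is entrywise nonnegative for `t ≥ 0`
(shift it by a multiple of the identity and use the power series), so every minor of
`exp (t • Z)` is nonnegative.
-/

open NormedSpace

namespace Matrix

theorem det_updateRow_submatrix_mul {ι κ R : Type*} [Fintype ι] [Fintype κ] [DecidableEq κ]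
    [CommRing R] (Z B : Matrix ι ι R) (f g : κ → ι) (a : κ) :
    ((B.submatrix f g).updateRow a fun b => (Z * B) (f a) (g b)).det =
      ∑ m, Z (f a) m * (B.submatrix (Function.update f a m) g).det := by
  have hrow : (fun b => (Z * B) (f a) (g b)) = ∑ m, Z (f a) m • fun b => B m (g b) := by
    ext b
    simp [mul_apply]
  have hupdate : ∀ m, (B.submatrix f g).updateRow a (fun b => B m (g b)) =
      B.submatrix (Function.update f a m) g := by
    intro m
    ext x b
    rcases eq_or_ne x a with rfl | hx <;> simp [*]
  let L := (detRowAlternating : (κ → R) [⋀^κ]→ₗ[R] R).toMultilinearMap.toLinearMap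
    (B.submatrix f g) a
  simp_rw [hrow, ← hupdate]
  change L _ = ∑ m, Z (f a) m * L _
  simp_rw [map_sum, map_smul, smul_eq_mul]

section Calculus

variable {ι : Type*} [Fintype ι]

theorem hasDerivAt_mul_apply {F G : ℝ → Matrix ι ι ℝ} {F' G' : Matrix ι ι ℝ} {t : ℝ}
    (hF : ∀ i j, HasDerivAt (fun s => F s i j) (F' i j) t)
    (hG : ∀ i j, HasDerivAt (fun s => G s i j) (G' i j) t) (i j : ι) :
    HasDerivAt (fun s => (F s * G s) i j) ((F' * G t + F t * G') i j) t := by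
  simp only [mul_apply, add_apply, ← Finset.sum_add_distrib]
  exact HasDerivAt.fun_sum fun k _ => (hF i k).mul (hG k j)

variable [DecidableEq ι]

theorem hasDerivAt_det {M : ℝ → Matrix ι ι ℝ} {M' : Matrix ι ι ℝ} {t : ℝ}
    (h : ∀ i j, HasDerivAt (fun s => M s i j) (M' i j) t) :
    HasDerivAt (fun s => (M s).det) (∑ i, ((M t).updateRow i (M' i)).det) t := by
  let detCML : ContinuousMultilinearMap ℝ (fun _ : ι => ι → ℝ) ℝ :=
    { (detRowAlternating : (ι → ℝ) [⋀^ι]→ₗ[ℝ] ℝ).toMultilinearMap with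
      cont := continuous_id.matrix_det }
  have hM : HasDerivAt M M' t := hasDerivAt_pi.2 fun i => hasDerivAt_pi.2 (h i)
  have := (detCML.hasFDerivAt (M t)).comp_hasDerivAt t hM
  exact this.congr_deriv (detCML.linearDeriv_apply (M t) M')

theorem hasDerivAt_exp_smul_apply (A : Matrix ι ι ℝ) (t : ℝ) (i j : ι) :
    HasDerivAt (fun s : ℝ => exp (s • A) i j) ((A * exp (t • A)) i j) t := by
  open scoped Norms.Operator in
  exact (LinearMap.toContinuousLinearMap (entryLinearMap ℝ ℝ i j)).hasFDerivAt.comp_hasDerivAt t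
    (hasDerivAt_exp_smul_const' A t)

theorem commute_self_exp_smul (A : Matrix ι ι ℝ) (t : ℝ) : Commute A (exp (t • A)) := by
  open scoped Norms.Operator in exact ((Commute.refl A).smul_right t).exp_right

theorem exp_smul_eq_of_hasDerivAt {A : Matrix ι ι ℝ} {F : ℝ → Matrix ι ι ℝ}
    (hF : ∀ s i j, HasDerivAt (fun s => F s i j) ((A * F s) i j) s) (h0 : F 0 = 1) (s : ℝ) :
    exp (s • A) = F s := by
  have hconst : ∀ u, exp (u • -A) * F u = 1 := by
    intro u
    ext i j
    have hderiv : ∀ v, HasDerivAt (fun w => (exp (w • -A) * F w) i j) 0 v := by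
      intro v
      have hzero : -A * exp (v • -A) * F v + exp (v • -A) * (A * F v) = 0 := by
        rw [(commute_self_exp_smul (-A) v).eq, mul_neg, neg_mul, mul_assoc, neg_add_cancel]
      convert hasDerivAt_mul_apply (hasDerivAt_exp_smul_apply (-A) v) (hF v) i j using 1
      rw [hzero, zero_apply]
    simpa [h0] using is_const_of_deriv_eq_zero (fun v => (hderiv v).differentiableAt)
      (fun v => (hderiv v).deriv) u 0
  have hinv : exp (s • A) * exp (s • -A) = 1 := by
    rw [← exp_add_of_commute _ _ (((Commute.refl A).neg_right.smul_left s).smul_right s),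
      smul_neg, add_neg_cancel, exp_zero]
  calc exp (s • A) = exp (s • A) * (exp (s • -A) * F s) := by rw [hconst, mul_one]
    _ = F s := by rw [← mul_assoc, hinv, one_mul]

theorem exp_apply_nonneg {B : Matrix ι ι ℝ} (hB : ∀ i j, 0 ≤ B i j) (i j : ι) :
    0 ≤ exp B i j := by
  have hpow : ∀ k i j, 0 ≤ (B ^ k) i j := by
    intro k
    induction k with
    | zero => intro i j; rw [pow_zero, one_apply]; split_ifs <;> norm_num
    | succ k ih =>
      intro i j
      rw [pow_succ, mul_apply]
      exact Finset.sum_nonneg fun m _ => mul_nonneg (ih i m) (hB m j)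
  open scoped Norms.Operator in
  have hsum := (exp_series_hasSum_exp' (𝕂 := ℝ) B).mapL
    (LinearMap.toContinuousLinearMap (entryLinearMap ℝ ℝ i j))
  exact hsum.nonneg fun k => mul_nonneg (by positivity) (hpow k i j)

theorem exp_smul_apply_nonneg {A : Matrix ι ι ℝ} (hA : ∀ i j, i ≠ j → 0 ≤ A i j) {t : ℝ}
    (ht : 0 ≤ t) (i j : ι) : 0 ≤ exp (t • A) i j := by
  obtain ⟨c, hc⟩ : ∃ c : ℝ, ∀ k, 0 ≤ A k k + c :=
    ⟨∑ k, |A k k|, fun k => by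
      linarith [neg_abs_le (A k k), Finset.single_le_sum (fun l _ => abs_nonneg (A l l))
        (Finset.mem_univ k)]⟩
  have hsplit : exp (t • A) = Real.exp (-(t * c)) • exp (t • (A + c • 1)) := by
    have hA : t • A = algebraMap ℝ _ (-(t * c)) + t • (A + c • 1) := by
      rw [Algebra.algebraMap_eq_smul_one, smul_add, smul_smul, neg_smul]
      abel
    rw [hA, exp_add_of_commute _ _ (Algebra.commute_algebraMap_left _ _)]
    have hexp : exp (algebraMap ℝ (Matrix ι ι ℝ) (-(t * c)))
        = algebraMap ℝ _ (Real.exp (-(t * c))) := by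
      open scoped Norms.Operator in
      rw [Real.exp_eq_exp_ℝ]
      exact (algebraMap_exp_comm _).symm
    rw [hexp, ← Algebra.smul_def]
  rw [hsplit, smul_apply, smul_eq_mul]
  refine mul_nonneg (Real.exp_pos _).le (exp_apply_nonneg (fun k l => ?_) i j)
  rcases eq_or_ne k l with rfl | hkl
  · simpa using mul_nonneg ht (hc k)
  · simpa [hkl] using mul_nonneg ht (hA k l hkl)

end Calculus

end Matrix

namespace Finset

variable {α : Type*} [DecidableEq α] {J K : Finset α} {j m : α}

lemma sdiff_insert_erase (hj : j ∈ J) (hm : m ∉ J) : J \ insert m (J.erase j) = {j} := by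
  ext x
  simp only [mem_sdiff, mem_insert, mem_erase, mem_singleton]
  grind

lemma insert_erase_sdiff (hm : m ∉ J) : insert m (J.erase j) \ J = {m} := by
  ext x
  simp only [mem_sdiff, mem_insert, mem_erase, mem_singleton]
  grind

lemma card_insert_erase (hj : j ∈ J) (hm : m ∉ J) : (insert m (J.erase j)).card = J.card := by
  rw [card_insert_of_notMem fun h => hm (mem_of_mem_erase h), card_erase_add_one hj]

lemma exists_eq_insert_erase (h₁ : (J \ K).card = 1) (h₂ : (K \ J).card = 1) :
    ∃ j ∈ J, ∃ m ∉ J, K = insert m (J.erase j) := by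
  obtain ⟨j, hj⟩ := card_eq_one.mp h₁
  obtain ⟨m, hm⟩ := card_eq_one.mp h₂
  have hjJK := hj ▸ mem_singleton_self j
  have hmKJ := hm ▸ mem_singleton_self m
  refine ⟨j, (mem_sdiff.mp hjJK).1, m, (mem_sdiff.mp hmKJ).2, ?_⟩
  ext x
  have hx₁ := congrArg (x ∈ ·) hj
  have hx₂ := congrArg (x ∈ ·) hm
  simp only [mem_sdiff, mem_singleton, eq_iff_iff] at hx₁ hx₂
  simp only [mem_insert, mem_erase]
  grind

lemma sum_orderEmbOfFin {α M : Type*} [LinearOrder α] [AddCommMonoid M] (s : Finset α) {k : ℕ}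
    (h : s.card = k) (φ : α → M) : ∑ i, φ (s.orderEmbOfFin h i) = ∑ j ∈ s, φ j := by
  conv_rhs => rw [← s.map_orderEmbOfFin_univ h]
  exact (sum_map _ _ _).symm

end Finset

lemma Fin.strictMono_update_of_adjacent {k n : ℕ} {f : Fin k → Fin n} (hf : StrictMono f)
    {a : Fin k} {m : Fin n} (hm : ∀ x, f x ≠ m) (hadj : |(f a : ℤ) - m| ≤ 1) :
    StrictMono (Function.update f a m) := by
  have hm' : ∀ x, (f x : ℕ) ≠ m := fun x h => hm x (Fin.ext h)
  obtain ⟨h₁, h₂⟩ := abs_le.mp hadj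
  intro x y hxy
  have hfxy : (f x : ℕ) < f y := hf hxy
  simp only [Function.update_apply, Fin.lt_def]
  split_ifs with hx hy hy
  · exact absurd (hx.trans hy.symm) hxy.ne
  · subst hx; have := hm' y; omega
  · subst hy; have := hm' x; omega
  · exact hfxy

variable {n : ℕ}

lemma minorJI_of_card_ne (B : Matrix (Fin n) (Fin n) ℝ) {J I : Finset (Fin n)}
    (h : J.card ≠ I.card) : minorJI B J I = 0 :=
  dif_neg h

lemma minorJI_eq_det_submatrix (B : Matrix (Fin n) (Fin n) ℝ) {J I : Finset (Fin n)}
    (h : J.card = I.card) {f : Fin I.card → Fin n} (hf : StrictMono f) (hfJ : ∀ a, f a ∈ J) :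
    minorJI B J I = (B.submatrix f (I.orderEmbOfFin rfl)).det := by
  rw [minorJI, dif_pos h, Finset.orderEmbOfFin_unique h hfJ hf]
  rfl

lemma Comp_one : Comp (1 : Matrix (Fin n) (Fin n) ℝ) = 1 := by
  ext J I
  by_cases h : J.card = I.card
  · rw [Comp, minorJI_eq_det_submatrix 1 h (J.orderEmbOfFin h).strictMono
      (J.orderEmbOfFin_mem h)]
    rcases eq_or_ne J I with rfl | hJI
    · rw [Matrix.submatrix_one _ (J.orderEmbOfFin h).injective, Matrix.det_one,
        Matrix.one_apply_eq]
    · obtain ⟨j, hjJ, hjI⟩ : ∃ j ∈ J, j ∉ I := by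
        by_contra! hJ
        exact hJI (Finset.eq_of_subset_of_card_le hJ h.ge)
      rw [Matrix.one_apply_ne hJI]
      obtain ⟨a, rfl⟩ : j ∈ Set.range (J.orderEmbOfFin h) := by
        rwa [J.range_orderEmbOfFin h]
      refine Matrix.det_eq_zero_of_row_eq_zero a fun b => Matrix.one_apply_ne ?_
      exact fun hab => hjI (hab ▸ I.orderEmbOfFin_mem rfl b)
  · have hJI : J ≠ I := fun hJI => h (congrArg Finset.card hJI)
    rw [Comp, minorJI_of_card_ne 1 h, Matrix.one_apply_ne hJI]

lemma DZ_insert_erase (Z : Matrix (Fin n) (Fin n) ℝ) {J : Finset (Fin n)} {j m : Fin n}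
    (hj : j ∈ J) (hm : m ∉ J) : DZ Z J (insert m (J.erase j)) = Z j m := by
  have hne : J ≠ insert m (J.erase j) := fun h => hm (h ▸ Finset.mem_insert_self m _)
  simp [DZ, hne, Finset.sdiff_insert_erase hj hm, Finset.insert_erase_sdiff hm]

lemma DZ_mul_apply (Z : Matrix (Fin n) (Fin n) ℝ) (C : Matrix (Finset (Fin n)) (Finset (Fin n)) ℝ)
    (J I : Finset (Fin n)) :
    (DZ Z * C) J I = (∑ j ∈ J, Z j j) * C J I +
      ∑ j ∈ J, ∑ m ∈ Jᶜ, Z j m * C (insert m (J.erase j)) I := by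
  rw [Matrix.mul_apply, ← Finset.add_sum_erase _ _ (Finset.mem_univ J), ← Finset.sum_product']
  congr 1
  · simp [DZ]
  refine (Finset.sum_bij_ne_zero (fun p _ _ => insert p.2 (J.erase p.1)) ?_ ?_ ?_ ?_).symm
  · rintro ⟨j, m⟩ hjm -
    obtain ⟨hj, hm⟩ := Finset.mem_product.mp hjm
    refine Finset.mem_erase.mpr ⟨fun h => ?_, Finset.mem_univ _⟩
    exact Finset.mem_compl.mp hm (h ▸ Finset.mem_insert_self m _)
  · rintro ⟨j, m⟩ hjm - ⟨j', m'⟩ hjm' - h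
    simp only [Finset.mem_product, Finset.mem_compl] at hjm hjm'
    have h₁ := Finset.sdiff_insert_erase hjm.1 hjm.2
    have h₂ := Finset.insert_erase_sdiff (j := j) hjm.2
    rw [h, Finset.sdiff_insert_erase hjm'.1 hjm'.2] at h₁
    rw [h, Finset.insert_erase_sdiff hjm'.2] at h₂
    simp_all
  · intro K hK hDK
    have hJK : J ≠ K := fun h => (Finset.mem_erase.mp hK).1 h.symm
    have hcard : (K \ J).card = 1 ∧ (J \ K).card = 1 := by
      by_contra hc
      simp [DZ, hJK, hc] at hDK
    obtain ⟨j, hj, m, hm, rfl⟩ := Finset.exists_eq_insert_erase hcard.2 hcard.1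
    exact ⟨(j, m), Finset.mem_product.mpr ⟨hj, Finset.mem_compl.mpr hm⟩,
      by rwa [DZ_insert_erase Z hj hm] at hDK, rfl⟩
  · rintro ⟨j, m⟩ hjm -
    simp only [Finset.mem_product, Finset.mem_compl] at hjm
    rw [DZ_insert_erase Z hjm.1 hjm.2]

lemma DZ_apply_nonneg_of_ne {Z : Matrix (Fin n) (Fin n) ℝ} (hoff : ∀ i j, i ≠ j → 0 ≤ Z i j)
    {J K : Finset (Fin n)} (hJK : J ≠ K) : 0 ≤ DZ Z J K := by
  simp only [DZ, if_neg hJK]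
  split_ifs
  · refine Finset.sum_nonneg fun k hk => Finset.sum_nonneg fun j hj => hoff j k ?_
    rintro rfl
    exact (Finset.mem_sdiff.mp hj).2 (Finset.mem_sdiff.mp hk).1
  · exact le_rfl

/- A nonzero `Z (f a) m` forces `m` to be adjacent to `f a`, so putting row `m` in place of
row `f a` keeps the rows sorted and no sign appears. -/
lemma mul_det_submatrix_update_of_notMem {Z : Matrix (Fin n) (Fin n) ℝ}
    (htri : ∀ i j : Fin n, 1 < |(i : ℤ) - j| → Z i j = 0)
    (B : Matrix (Fin n) (Fin n) ℝ) {J I : Finset (Fin n)} (h : J.card = I.card)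
    {f : Fin I.card → Fin n} (hf : StrictMono f) (hfJ : ∀ x, f x ∈ J) (a : Fin I.card) {m : Fin n}
    (hm : m ∉ J) :
    Z (f a) m * (B.submatrix (Function.update f a m) (I.orderEmbOfFin rfl)).det =
      Z (f a) m * minorJI B (insert m (J.erase (f a))) I := by
  by_cases hZ : Z (f a) m = 0
  · rw [hZ, zero_mul, zero_mul]
  have hupdate : StrictMono (Function.update f a m) :=
    Fin.strictMono_update_of_adjacent hf (fun x hx => hm (hx ▸ hfJ x))
      (not_lt.mp fun hlt => hZ (htri _ _ hlt))
  rw [minorJI_eq_det_submatrix B ((Finset.card_insert_erase (hfJ a) hm).trans h) hupdate]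
  intro x
  rcases eq_or_ne x a with rfl | hx
  · simp
  · simpa [hx] using Or.inr ⟨hf.injective.ne hx, hfJ x⟩

lemma sum_mul_det_submatrix_update {Z : Matrix (Fin n) (Fin n) ℝ}
    (htri : ∀ i j : Fin n, 1 < |(i : ℤ) - j| → Z i j = 0)
    (B : Matrix (Fin n) (Fin n) ℝ) {J I : Finset (Fin n)} (h : J.card = I.card) (a : Fin I.card) :
    ∑ m, Z (J.orderEmbOfFin h a) m *
        (B.submatrix (Function.update (J.orderEmbOfFin h) a m) (I.orderEmbOfFin rfl)).det =
      Z (J.orderEmbOfFin h a) (J.orderEmbOfFin h a) * minorJI B J I +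
        ∑ m ∈ Jᶜ, Z (J.orderEmbOfFin h a) m *
          minorJI B (insert m (J.erase (J.orderEmbOfFin h a))) I := by
  set f := J.orderEmbOfFin h
  rw [← Finset.sum_add_sum_compl J]
  congr 1
  · rw [Finset.sum_eq_single_of_mem (f a) (J.orderEmbOfFin_mem h a)]
    · rw [Function.update_eq_self, minorJI_eq_det_submatrix B h f.strictMono
        (J.orderEmbOfFin_mem h)]
    intro m hmJ hma
    obtain ⟨a', rfl⟩ : m ∈ Set.range f := by rwa [J.range_orderEmbOfFin h]
    have haa' : a ≠ a' := by rintro rfl; exact hma rfl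
    rw [Matrix.det_zero_of_row_eq haa' (by ext b; simp [haa'.symm]), mul_zero]
  · exact Finset.sum_congr rfl fun m hm => mul_det_submatrix_update_of_notMem htri B h
      f.strictMono (J.orderEmbOfFin_mem h) a (Finset.mem_compl.mp hm)

theorem hasDerivAt_minorJI {Z : Matrix (Fin n) (Fin n) ℝ}
    (htri : ∀ i j : Fin n, 1 < |(i : ℤ) - j| → Z i j = 0)
    {B : ℝ → Matrix (Fin n) (Fin n) ℝ} {t : ℝ}
    (hB : ∀ i j, HasDerivAt (fun s => B s i j) ((Z * B t) i j) t) (J I : Finset (Fin n)) :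
    HasDerivAt (fun s => minorJI (B s) J I) ((DZ Z * Comp (B t)) J I) t := by
  rw [DZ_mul_apply]
  by_cases h : J.card = I.card
  · set f := J.orderEmbOfFin h
    set g := I.orderEmbOfFin rfl
    have hminor : ∀ s, minorJI (B s) J I = ((B s).submatrix f g).det := fun s =>
      minorJI_eq_det_submatrix _ h f.strictMono (J.orderEmbOfFin_mem h)
    simp only [hminor]
    refine (Matrix.hasDerivAt_det (M := fun s => (B s).submatrix f g)
      fun a b => hB (f a) (g b)).congr_deriv ?_
    rw [Finset.sum_congr rfl fun a _ => (Matrix.det_updateRow_submatrix_mul _ _ _ _ a).trans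
      (sum_mul_det_submatrix_update htri (B t) h a), Finset.sum_add_distrib, ← Finset.sum_mul]
    congr 1
    · rw [J.sum_orderEmbOfFin h fun j => Z j j]
      rfl
    · exact J.sum_orderEmbOfFin h fun j =>
        ∑ m ∈ Jᶜ, Z j m * minorJI (B t) (insert m (J.erase j)) I
  · have hC : ∀ K : Finset (Fin n), K.card = J.card → Comp (B t) K I = 0 := fun K hK =>
      minorJI_of_card_ne _ (hK.trans_ne h)
    simp only [minorJI_of_card_ne _ h, hC J rfl, mul_zero, zero_add]
    rw [Finset.sum_eq_zero fun j hj => Finset.sum_eq_zero fun m hm => by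
      rw [hC _ (Finset.card_insert_erase hj (Finset.mem_compl.mp hm)), mul_zero]]
    exact hasDerivAt_const t 0

/-- For a tridiagonal real matrix `Z` with nonnegative off-diagonal entries and `t ≥ 0`,
the matrix exponential `exp(tZ)` is totally nonnegative, and `exp(t·D(Z)) = Comp(exp(tZ))`. -/
theorem exp_tridiagonal_totallyNonneg_and_exp_DZ {n : ℕ} (Z : Matrix (Fin n) (Fin n) ℝ)
    (htri : ∀ i j : Fin n, 1 < |(i : ℤ) - (j : ℤ)| → Z i j = 0)
    (hoff : ∀ i j : Fin n, i ≠ j → 0 ≤ Z i j) (t : ℝ) (ht : 0 ≤ t) :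
    TotallyNonneg (NormedSpace.exp (t • Z)) ∧
      NormedSpace.exp (t • DZ Z) = Comp (NormedSpace.exp (t • Z)) := by
  have hexp : ∀ s : ℝ, exp (s • DZ Z) = Comp (exp (s • Z)) :=
    Matrix.exp_smul_eq_of_hasDerivAt
      (fun s => hasDerivAt_minorJI htri (Matrix.hasDerivAt_exp_smul_apply Z s))
      (by rw [zero_smul, exp_zero, Comp_one])
  refine ⟨fun J I _ => ?_, hexp t⟩
  have hnonneg := Matrix.exp_smul_apply_nonneg (fun J K => DZ_apply_nonneg_of_ne hoff) ht J I
  rwa [hexp] at hnonneg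
end
end

section
/- Let f ∈ ℂ[x₁,…,xₙ] be a stable multiaffine polynomial and let ε > 0. Then there exists a multiaffine polynomial g ∈ ℂ[x₁,…,xₙ] such that: (i) g is stable; (ii) every coefficient of f − g has absolute value less than ε; (iii) for every k, if f has no monomial of total degree k in its support then g has no monomial of total degree k in its support; and (iv) for every k, if f has some monomial of total degree k in its support, then every multiaffine monomial x^S with |S| = k (S ⊆ [n]) lies in the support of g. -/
open MvPolynomial

noncomputable section

/-- A polynomial is multiaffine if it has degree at most one in each variable. -/
def MultiAffine {n : ℕ} (f : MvPolynomial (Fin n) ℂ) : Prop :=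
  ∀ i, f.degreeOf i ≤ 1

/-- The exponent vector of the multiaffine monomial `x^S`. -/
def expOf {n : ℕ} (S : Finset (Fin n)) : Fin n →₀ ℕ := ∑ i ∈ S, Finsupp.single i 1


/-!
Freezing all variables but `xᵢ, xⱼ` turns a multiaffine `f` into `a + b z + c w + d z w`. For
fixed `w` in the upper half-plane, an affine `p + z q` with no zero there has `Im (p q̄) ≥ 0`,
whereas a zero `z` there forces `Im (p q̄) = -Im z ‖q‖² ≤ 0`. For `(1 - θ) f + θ (f ∘ swap i j)`
this quantity is `(1 - θ)` times the one of `f`, plus `θ` times the one of `f ∘ swap i j`, plus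
`θ (1 - θ) ‖b - c‖² Im w`; hence the average of `f` and its swap stays stable for `θ ∈ [0, 1]`.

For small `θ > 0` this average moves every coefficient by `O(θ)`, keeps nonzero coefficients
nonzero, creates no term in a new degree, and gives `x^(swap U)` the coefficient `θ [x^U] f` when
`[x^(swap U)] f = 0`. If `x^S` is missing from `f` while `f` has a monomial of degree `|S|`, walking
from that monomial towards `S` by exchanges finds such a `U`. Each step therefore fills a missing
monomial; iterating with tolerances `ε/2, ε/4, …` fills them all.
-/

open Complex ComplexConjugate Filter Topology

section Exponents

variable {n : ℕ}

lemma expOf_apply (S : Finset (Fin n)) (k : Fin n) :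
    expOf S k = if k ∈ S then 1 else 0 := by
  simp [expOf, Finsupp.finsetSum_apply, Finsupp.single_apply]

lemma degree_expOf (S : Finset (Fin n)) : (expOf S).degree = S.card := by
  simp [expOf, map_sum]

lemma expOf_support_eq {m : Fin n →₀ ℕ} (hm : ∀ k, m k ≤ 1) : expOf m.support = m := by
  ext k
  have := hm k
  rw [expOf_apply]
  simp only [Finsupp.mem_support_iff]
  split_ifs <;> omega

lemma expOf_image {σ : Fin n → Fin n} (hσ : σ.Injective) (S : Finset (Fin n)) :
    expOf (S.image σ) = (expOf S).mapDomain σ := by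
  simp [expOf, Finset.sum_image hσ.injOn, Finsupp.mapDomain_finsetSum]

end Exponents

lemma exists_mem_image_swap_notMem {α : Type*} [DecidableEq α] {A : Set (Finset α)}
    {S T : Finset α} (hS : S ∈ A) (hT : T ∉ A) (hcard : S.card = T.card) :
    ∃ U ∈ A, ∃ i ∈ U, ∃ j ∉ U, U.image (Equiv.swap i j) ∉ A := by
  by_contra! hclosed
  suffices ∀ d, ∀ S ∈ A, S.card = T.card → (S \ T).card ≤ d → T ∈ A from
    hT (this _ S hS hcard le_rfl)
  intro d
  induction d with
  | zero =>
    intro S hS hcard hd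
    have hST : S ⊆ T := Finset.sdiff_eq_empty_iff_subset.mp (Finset.card_eq_zero.mp (by omega))
    rwa [← Finset.eq_of_subset_of_card_le hST hcard.ge]
  | succ d ih =>
    intro S hS hcard hd
    by_cases hST : S ⊆ T
    · rwa [← Finset.eq_of_subset_of_card_le hST hcard.ge]
    obtain ⟨i, hiS, hiT⟩ := Finset.not_subset.mp hST
    obtain ⟨j, hj⟩ : (T \ S).Nonempty := by
      rw [← Finset.card_pos, ← Finset.card_sdiff_comm hcard, Finset.card_pos]
      exact ⟨i, Finset.mem_sdiff.mpr ⟨hiS, hiT⟩⟩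
    obtain ⟨hjT, hjS⟩ := Finset.mem_sdiff.mp hj
    refine ih _ (hclosed S hS i hiS j hjS) ?_ ?_
    · rw [Finset.card_image_of_injective _ (Equiv.injective _), hcard]
    · have hsub : S.image (Equiv.swap i j) \ T ⊆ (S \ T).erase i := by
        intro x hx
        obtain ⟨hx, hxT⟩ := Finset.mem_sdiff.mp hx
        obtain ⟨y, hyS, rfl⟩ := Finset.mem_image.mp hx
        have hyi : y ≠ i := by rintro rfl; exact hxT (by simpa using hjT)
        have hyj : y ≠ j := by rintro rfl; exact hjS hyS
        rw [Equiv.swap_apply_of_ne_of_ne hyi hyj] at hxT ⊢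
        exact Finset.mem_erase.mpr ⟨hyi, Finset.mem_sdiff.mpr ⟨hyS, hxT⟩⟩
      have := Finset.card_le_card hsub
      rw [Finset.card_erase_of_mem (Finset.mem_sdiff.mpr ⟨hiS, hiT⟩)] at this
      omega

section Affine

variable {ι R : Type*} [Fintype ι] [DecidableEq ι] [CommRing R]

lemma eval_update_eq_of_degreeOf_le_one {f : MvPolynomial ι R} {i : ι} (hf : f.degreeOf i ≤ 1)
    (u : ι → R) (z : R) :
    eval (Function.update u i z) f =
      eval (Function.update u i 0) f +
        z * (eval (Function.update u i 1) f - eval (Function.update u i 0) f) := by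
  rw [eval_eq', eval_eq', eval_eq', ← Finset.sum_sub_distrib, Finset.mul_sum,
    ← Finset.sum_add_distrib]
  refine Finset.sum_congr rfl fun m hm => ?_
  have hprod : ∀ y : R, ∏ k, Function.update u i y k ^ m k =
      y ^ m i * ∏ k ∈ Finset.univ.erase i, u k ^ m k := fun y => by
    rw [← Finset.mul_prod_erase Finset.univ _ (Finset.mem_univ i), Function.update_self]
    congr 1
    exact Finset.prod_congr rfl fun k hk => by
      rw [Function.update_of_ne (Finset.ne_of_mem_erase hk)]
  rw [hprod, hprod, hprod]
  rcases Nat.le_one_iff_eq_zero_or_eq_one.mp (degreeOf_le_iff.mp hf m hm) with h | h <;>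
    (rw [h]; ring)

end Affine

lemma eq_bilinear_of_affine {R : Type*} [CommRing R] (G : R → R → R)
    (hz : ∀ z w, G z w = G 0 w + z * (G 1 w - G 0 w))
    (hw : ∀ z w, G z w = G z 0 + w * (G z 1 - G z 0)) (z w : R) :
    G z w = G 0 0 + (G 1 0 - G 0 0) * z + (G 0 1 - G 0 0) * w +
      (G 1 1 - G 1 0 - G 0 1 + G 0 0) * (z * w) := by
  rw [hw, hz z 0, hz z 1]
  ring

lemma im_mul_conj_of_add_mul_eq_zero {p q z : ℂ} (h : p + z * q = 0) :
    (p * conj q).im = -(z.im * normSq q) := by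
  rw [eq_neg_of_add_eq_zero_left h, neg_mul, mul_assoc, mul_conj]
  simp

lemma im_mul_conj_nonneg_of_forall_add_mul_ne_zero {p q : ℂ}
    (h : ∀ z : ℂ, 0 < z.im → p + z * q ≠ 0) : 0 ≤ (p * conj q).im := by
  by_cases hq : q = 0
  · simp [hq]
  have hroot : p + -p / q * q = 0 := by field_simp; ring
  by_contra! hneg
  rw [im_mul_conj_of_add_mul_eq_zero hroot] at hneg
  exact h _ (pos_of_mul_pos_left (neg_neg_iff_pos.mp hneg) (normSq_nonneg q)) hroot

lemma im_mul_conj_average_eq (a b c d w : ℂ) (θ : ℝ) :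
    ((a + (θ * b + (1 - θ) * c) * w) * conj ((1 - θ) * b + θ * c + d * w)).im =
      (1 - θ) * ((a + c * w) * conj (b + d * w)).im + θ * ((a + b * w) * conj (c + d * w)).im +
        θ * (1 - θ) * normSq (b - c) * w.im := by
  simp only [normSq_apply, mul_im, mul_re, add_re, add_im, sub_re, sub_im, conj_re, conj_im,
    ofReal_re, ofReal_im, one_re, one_im]
  ring

lemma average_swap_ne_zero {F : ℂ → ℂ → ℂ} {a b c d : ℂ}
    (hF : ∀ z w, F z w = a + b * z + c * w + d * (z * w))
    (hstable : ∀ z w, 0 < z.im → 0 < w.im → F z w ≠ 0) {θ : ℝ} (hθ0 : 0 ≤ θ) (hθ1 : θ ≤ 1)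
    {z w : ℂ} (hz : 0 < z.im) (hw : 0 < w.im) :
    (1 - θ) * F z w + θ * F w z ≠ 0 := by
  by_cases hdeg : θ * (1 - θ) * normSq (b - c) = 0
  · rcases mul_eq_zero.mp hdeg with hθ | hbc
    · rcases mul_eq_zero.mp hθ with rfl | hθ
      · simpa using hstable z w hz hw
      · obtain rfl : θ = 1 := by linarith
        simpa using hstable w z hw hz
    · obtain rfl : b = c := sub_eq_zero.mp (normSq_eq_zero.mp hbc)
      have hsymm : F w z = F z w := by rw [hF, hF]; ring
      rw [hsymm, ← add_mul, ← ofReal_one, ← ofReal_sub, ← ofReal_add, sub_add_cancel]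
      simpa using hstable z w hz hw
  have hpos : 0 < θ * (1 - θ) * normSq (b - c) :=
    (mul_nonneg (mul_nonneg hθ0 (sub_nonneg.mpr hθ1)) (normSq_nonneg _)).lt_of_ne' hdeg
  have h₁ : 0 ≤ ((a + c * w) * conj (b + d * w)).im :=
    im_mul_conj_nonneg_of_forall_add_mul_ne_zero fun z' hz' h0 =>
      hstable z' w hz' hw (by rw [hF]; linear_combination h0)
  have h₂ : 0 ≤ ((a + b * w) * conj (c + d * w)).im :=
    im_mul_conj_nonneg_of_forall_add_mul_ne_zero fun z' hz' h0 =>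
      hstable w z' hw hz' (by rw [hF]; linear_combination h0)
  intro h0
  have hroot : (a + (θ * b + (1 - θ) * c) * w) + z * ((1 - θ) * b + θ * c + d * w) = 0 := by
    rw [hF, hF] at h0
    linear_combination h0
  have h₃ := im_mul_conj_of_add_mul_eq_zero hroot
  rw [im_mul_conj_average_eq] at h₃
  linarith [mul_nonneg (sub_nonneg.mpr hθ1) h₁, mul_nonneg hθ0 h₂, mul_pos hpos hw,
    mul_nonneg hz.le (normSq_nonneg ((1 - θ) * b + θ * c + d * w))]

section MultiAffine

variable {n : ℕ} {f g : MvPolynomial (Fin n) ℂ}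

lemma MultiAffine.le_one (hf : MultiAffine f) {m : Fin n →₀ ℕ} (hm : m ∈ f.support) (i : Fin n) :
    m i ≤ 1 :=
  degreeOf_le_iff.mp (hf i) m hm

lemma MultiAffine.add (hf : MultiAffine f) (hg : MultiAffine g) : MultiAffine (f + g) :=
  fun i => (degreeOf_add_le i f g).trans (max_le (hf i) (hg i))

lemma MultiAffine.sub (hf : MultiAffine f) (hg : MultiAffine g) : MultiAffine (f - g) :=
  fun i => (degreeOf_sub_le i f g).trans (max_le (hf i) (hg i))

lemma MultiAffine.smul (hf : MultiAffine f) (c : ℂ) : MultiAffine (c • f) :=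
  fun i => by rw [smul_eq_C_mul]; exact (degreeOf_C_mul_le f i c).trans (hf i)

lemma MultiAffine.rename (hf : MultiAffine f) (σ : Equiv.Perm (Fin n)) :
    MultiAffine (rename σ f) :=
  fun i => by simpa using (degreeOf_rename_of_injective σ.injective (σ.symm i)).trans_le (hf _)

end MultiAffine

section SwapAverage

variable {n : ℕ}

def swapAverage (θ : ℂ) (i j : Fin n) (f : MvPolynomial (Fin n) ℂ) : MvPolynomial (Fin n) ℂ :=
  f + θ • (rename (Equiv.swap i j) f - f)

lemma MultiAffine.swapAverage {f : MvPolynomial (Fin n) ℂ} (hf : MultiAffine f) (θ : ℂ)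
    (i j : Fin n) : MultiAffine (swapAverage θ i j f) :=
  hf.add (((hf.rename _).sub hf).smul θ)

lemma eval_swapAverage (θ : ℂ) (i j : Fin n) (f : MvPolynomial (Fin n) ℂ) (u : Fin n → ℂ) :
    eval u (swapAverage θ i j f) = (1 - θ) * eval u f + θ * eval (u ∘ Equiv.swap i j) f := by
  simp only [swapAverage, map_add, map_sub, smul_eq_C_mul, map_mul, eval_C, eval_rename]
  ring

lemma coeff_swapAverage_image_swap (θ : ℂ) {i j : Fin n} {f : MvPolynomial (Fin n) ℂ}
    {S : Finset (Fin n)} (hS : f.coeff (expOf (S.image (Equiv.swap i j))) = 0) :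
    (swapAverage θ i j f).coeff (expOf (S.image (Equiv.swap i j))) = θ * f.coeff (expOf S) := by
  rw [swapAverage, coeff_add, coeff_smul, coeff_sub, hS, expOf_image (Equiv.injective _),
    coeff_rename_mapDomain _ (Equiv.injective _), smul_eq_mul]
  ring

theorem IsStable.swapAverage {f : MvPolynomial (Fin n) ℂ} (hf : IsStable f) (hma : MultiAffine f)
    {i j : Fin n} (hij : i ≠ j) {θ : ℝ} (hθ0 : 0 ≤ θ) (hθ1 : θ ≤ 1) :
    IsStable (swapAverage θ i j f) := by
  rcases hf with rfl | hf
  · left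
    simp [_root_.swapAverage]
  right
  intro u hu
  set G : ℂ → ℂ → ℂ := fun z w => eval (Function.update (Function.update u j w) i z) f with hG
  have hG_bilinear := eq_bilinear_of_affine G
    (fun z w => eval_update_eq_of_degreeOf_le_one (hma i) _ z)
    (fun z w => by
      simp only [hG, ← Function.update_comm hij]
      exact eval_update_eq_of_degreeOf_le_one (hma j) _ w)
  have hG_stable : ∀ z w, 0 < z.im → 0 < w.im → G z w ≠ 0 := fun z w hz hw =>
    hf _ fun k => by
      rcases eq_or_ne k i with rfl | hki
      · simpa using hz
      rw [Function.update_of_ne hki]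
      rcases eq_or_ne k j with rfl | hkj
      · simpa using hw
      rw [Function.update_of_ne hkj]
      exact hu k
  have hu_eq : eval u f = G (u i) (u j) := by simp [hG]
  rw [eval_swapAverage, Equiv.comp_swap_eq_update, hu_eq]
  exact average_swap_ne_zero hG_bilinear hG_stable hθ0 hθ1 (hu i) (hu j)

end SwapAverage

section Perturbation

variable {σ : Type*}

lemma homogeneousComponent_ne_zero_iff {R : Type*} [CommSemiring R] {f : MvPolynomial σ R}
    {k : ℕ} : homogeneousComponent k f ≠ 0 ↔ ∃ m ∈ f.support, m.degree = k := by
  rw [← support_nonempty, support_homogeneousComponent, Finset.filter_nonempty_iff]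

lemma homogeneousComponent_eq_zero_iff {R : Type*} [CommSemiring R] {f : MvPolynomial σ R}
    {k : ℕ} : homogeneousComponent k f = 0 ↔ ∀ m : σ →₀ ℕ, m.degree = k → f.coeff m = 0 := by
  rw [← not_iff_not, ← ne_eq, homogeneousComponent_ne_zero_iff]
  simp [and_comm]

structure IsPerturbation (ε : ℝ) (f g : MvPolynomial σ ℂ) : Prop where
  norm_coeff_sub_lt : ∀ m, ‖f.coeff m - g.coeff m‖ < ε
  support_subset : f.support ⊆ g.support
  homogeneousComponent_eq_zero :
    ∀ k, homogeneousComponent k f = 0 → homogeneousComponent k g = 0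

namespace IsPerturbation

variable {ε δ : ℝ} {f g h : MvPolynomial σ ℂ}

lemma refl (hε : 0 < ε) (f : MvPolynomial σ ℂ) : IsPerturbation ε f f :=
  ⟨fun m => by simpa using hε, subset_rfl, fun _ => id⟩

lemma trans (hfg : IsPerturbation ε f g) (hgh : IsPerturbation δ g h) :
    IsPerturbation (ε + δ) f h where
  norm_coeff_sub_lt m := (norm_sub_le_norm_sub_add_norm_sub _ _ _).trans_lt
    (add_lt_add (hfg.norm_coeff_sub_lt m) (hgh.norm_coeff_sub_lt m))
  support_subset := hfg.support_subset.trans hgh.support_subset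
  homogeneousComponent_eq_zero k hk :=
    hgh.homogeneousComponent_eq_zero k (hfg.homogeneousComponent_eq_zero k hk)

end IsPerturbation

lemma eventually_isPerturbation_add_smul {ε : ℝ} (hε : 0 < ε) {f p : MvPolynomial σ ℂ}
    (hp : ∀ k, homogeneousComponent k f = 0 → homogeneousComponent k p = 0) :
    ∀ᶠ θ in 𝓝 (0 : ℂ), IsPerturbation ε f (f + θ • p) := by
  classical
  have hcoeff : ∀ m, Tendsto (fun θ : ℂ => (f + θ • p).coeff m) (𝓝 0) (𝓝 (f.coeff m)) := by
    intro m
    simp only [coeff_add, coeff_smul, smul_eq_mul]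
    simpa using ((continuous_id.mul continuous_const).const_add (f.coeff m)).tendsto (0 : ℂ)
  have hclose : ∀ᶠ θ : ℂ in 𝓝 0, ∀ m ∈ f.support ∪ p.support,
      ‖f.coeff m - (f + θ • p).coeff m‖ < ε :=
    eventually_all_finset _ |>.mpr fun m _ => (Metric.tendsto_nhds.mp (hcoeff m) ε hε).mono
      fun θ h => by rwa [dist_comm, dist_eq_norm] at h
  have hsupport : ∀ᶠ θ : ℂ in 𝓝 0, ∀ m ∈ f.support, (f + θ • p).coeff m ≠ 0 :=
    eventually_all_finset _ |>.mpr fun m hm => (hcoeff m).eventually_ne (mem_support_iff.mp hm)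
  filter_upwards [hclose, hsupport] with θ hclose hsupport
  refine ⟨fun m => ?_, fun m hm => mem_support_iff.mpr (hsupport m hm), fun k hk => ?_⟩
  · by_cases hm : m ∈ f.support ∪ p.support
    · exact hclose m hm
    · simp_all
  · simp [hk, hp k hk]

end Perturbation

lemma eventually_isPerturbation_swapAverage {n : ℕ} {ε : ℝ} (hε : 0 < ε)
    (f : MvPolynomial (Fin n) ℂ) (i j : Fin n) :
    ∀ᶠ θ : ℝ in 𝓝 0, IsPerturbation ε f (swapAverage θ i j f) :=
  (continuous_ofReal.tendsto' 0 0 ofReal_zero).eventually <|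
    eventually_isPerturbation_add_smul hε fun k hk => by
      simp [map_sub, ← rename_homogeneousComponent, hk]

section MissingMonomials

variable {n : ℕ}

open Classical in
def missingMonomials (f : MvPolynomial (Fin n) ℂ) : Finset (Finset (Fin n)) :=
  {S | homogeneousComponent S.card f ≠ 0 ∧ f.coeff (expOf S) = 0}

lemma mem_missingMonomials {f : MvPolynomial (Fin n) ℂ} {S : Finset (Fin n)} :
    S ∈ missingMonomials f ↔ homogeneousComponent S.card f ≠ 0 ∧ f.coeff (expOf S) = 0 := by
  simp [missingMonomials]

lemma IsPerturbation.missingMonomials_subset {ε : ℝ} {f g : MvPolynomial (Fin n) ℂ}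
    (h : IsPerturbation ε f g) : missingMonomials g ⊆ missingMonomials f := by
  intro S hS
  obtain ⟨hlevel, hcoeff⟩ := mem_missingMonomials.mp hS
  exact mem_missingMonomials.mpr ⟨mt (h.homogeneousComponent_eq_zero _) hlevel,
    notMem_support_iff.mp fun hS' => notMem_support_iff.mpr hcoeff (h.support_subset hS')⟩

end MissingMonomials

section Construction

variable {n : ℕ} {f : MvPolynomial (Fin n) ℂ} {ε : ℝ}

lemma exists_exchange_of_mem_missingMonomials (hf : MultiAffine f) {S : Finset (Fin n)}
    (hS : S ∈ missingMonomials f) :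
    ∃ U : Finset (Fin n), ∃ i ∈ U, ∃ j ∉ U, U.card = S.card ∧ f.coeff (expOf U) ≠ 0 ∧
      f.coeff (expOf (U.image (Equiv.swap i j))) = 0 := by
  obtain ⟨hlevel, hS0⟩ := mem_missingMonomials.mp hS
  obtain ⟨m, hm, hmdeg⟩ := homogeneousComponent_ne_zero_iff.mp hlevel
  have hm_eq := expOf_support_eq (hf.le_one hm)
  set A : Set (Finset (Fin n)) := {U | U.card = S.card ∧ f.coeff (expOf U) ≠ 0}
  have hmA : m.support ∈ A :=
    ⟨by rw [← degree_expOf, hm_eq, hmdeg], by rwa [hm_eq, ← mem_support_iff]⟩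
  obtain ⟨U, ⟨hUcard, hU⟩, i, hi, j, hj, hUA⟩ :=
    exists_mem_image_swap_notMem hmA (fun h => h.2 hS0) hmA.1
  refine ⟨U, i, hi, j, hj, hUcard, hU, ?_⟩
  by_contra h
  exact hUA ⟨by rw [Finset.card_image_of_injective _ (Equiv.injective _), hUcard], h⟩

lemma exists_isPerturbation_card_missingMonomials_lt (hf : MultiAffine f) (hstable : IsStable f)
    {S : Finset (Fin n)} (hS : S ∈ missingMonomials f) (hε : 0 < ε) :
    ∃ g, MultiAffine g ∧ IsStable g ∧ IsPerturbation ε f g ∧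
      (missingMonomials g).card < (missingMonomials f).card := by
  obtain ⟨U, i, hi, j, hj, hUcard, hU, hT0⟩ := exists_exchange_of_mem_missingMonomials hf hS
  set T := U.image (Equiv.swap i j)
  have hT : T ∈ missingMonomials f := by
    refine mem_missingMonomials.mpr ⟨?_, hT0⟩
    rw [Finset.card_image_of_injective _ (Equiv.injective _), hUcard]
    exact (mem_missingMonomials.mp hS).1
  have hsmall : ∀ᶠ θ : ℝ in 𝓝[>] 0,
      (IsPerturbation ε f (swapAverage θ i j f) ∧ θ ≤ 1) ∧ 0 < θ :=
    (((eventually_isPerturbation_swapAverage hε f i j).and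
      (eventually_le_nhds zero_lt_one)).filter_mono nhdsWithin_le_nhds).and self_mem_nhdsWithin
  obtain ⟨θ, ⟨hpert, hθ1⟩, hθ0⟩ := hsmall.exists
  have hTg : (swapAverage θ i j f).coeff (expOf T) ≠ 0 := by
    rw [coeff_swapAverage_image_swap _ hT0]
    exact mul_ne_zero (ofReal_ne_zero.mpr hθ0.ne') hU
  refine ⟨_, hf.swapAverage _ i j, hstable.swapAverage hf (ne_of_mem_of_not_mem hi hj) hθ0.le hθ1,
    hpert, Finset.card_lt_card ?_⟩
  exact (Finset.ssubset_iff_of_subset hpert.missingMonomials_subset).mpr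
    ⟨T, hT, fun h => hTg (mem_missingMonomials.mp h).2⟩

lemma exists_isPerturbation_missingMonomials_eq_empty (hf : MultiAffine f) (hstable : IsStable f)
    (hε : 0 < ε) :
    ∃ g, MultiAffine g ∧ IsStable g ∧ IsPerturbation ε f g ∧ missingMonomials g = ∅ := by
  induction hN : (missingMonomials f).card using Nat.strong_induction_on generalizing f ε with
  | _ N ih =>
  obtain hempty | ⟨S, hS⟩ := (missingMonomials f).eq_empty_or_nonempty
  · exact ⟨f, hf, hstable, .refl hε f, hempty⟩
  obtain ⟨g, hg, hgstable, hfg, hlt⟩ :=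
    exists_isPerturbation_card_missingMonomials_lt hf hstable hS (half_pos hε)
  obtain ⟨g', hg', hg'stable, hgg', hempty⟩ := ih _ (hN ▸ hlt) hg hgstable (half_pos hε) rfl
  exact ⟨g', hg', hg'stable, add_halves ε ▸ hfg.trans hgg', hempty⟩

end Construction

/-- Any multiaffine stable polynomial can be perturbed, by an arbitrarily small change of its
coefficients, into a multiaffine stable polynomial with the same degrees of terms and whose
support contains *all* multiaffine monomials in those degrees. -/
theorem stable_perturbation_full_support {n : ℕ} (f : MvPolynomial (Fin n) ℂ)
    (hf : MultiAffine f) (hstable : IsStable f) (ε : ℝ) (hε : 0 < ε) :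
    ∃ g : MvPolynomial (Fin n) ℂ, MultiAffine g ∧
      IsStable g ∧
      (∀ m : Fin n →₀ ℕ, ‖(f - g).coeff m‖ < ε) ∧
      (∀ k : ℕ, (∀ m : Fin n →₀ ℕ, (∑ i, m i) = k → f.coeff m = 0) →
        ∀ m : Fin n →₀ ℕ, (∑ i, m i) = k → g.coeff m = 0) ∧
      (∀ k : ℕ, (∃ m ∈ f.support, (∑ i, m i) = k) →
        ∀ S : Finset (Fin n), S.card = k → g.coeff (expOf S) ≠ 0) := by
  obtain ⟨g, hg, hgstable, hfg, hfull⟩ :=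
    exists_isPerturbation_missingMonomials_eq_empty hf hstable hε
  simp only [← Finsupp.degree_eq_sum]
  refine ⟨g, hg, hgstable, fun m => by simpa using hfg.norm_coeff_sub_lt m, fun k hk => ?_,
    fun k hk S hS hS0 => ?_⟩
  · rw [← homogeneousComponent_eq_zero_iff] at hk ⊢
    exact hfg.homogeneousComponent_eq_zero k hk
  · obtain ⟨m, hm, rfl⟩ := hk
    have hlevel : homogeneousComponent S.card g ≠ 0 :=
      homogeneousComponent_ne_zero_iff.mpr ⟨m, hfg.support_subset hm, hS.symm⟩
    simpa [hfull] using mem_missingMonomials.mpr ⟨hlevel, hS0⟩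
end
end
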